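/- arXiv:math/0411444 — 9 statements merged into one kernel-verified Lean document; each statement's English description precedes it below -/
import Mathlib

section
/- Let d1, d2 be coprime integers with 1 < d1 < d2, and let Δ(d1,d2) be the (finite) set of integers not representable as nonnegative integer combinations of d1 and d2. Then the sum of the elements of Δ(d1,d2) equals (1/12)(d1−1)(d2−1)(2·d1·d2 − d1 − d2 − 1). -/
/-!
As `d2` is a unit modulo `d1`, every residue class modulo `d1` contains `j * d2` for a unique
`j < d1`, and a number in that class is representable iff it is at least `j * d2` (the coefficient
of `d2` is `≡ j` modulo `d1`, hence `≥ j`). So the gaps of the class are `j * d2 % d1 + i * d1`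
with `i < j * d2 / d1`, an arithmetic progression with an explicit sum. Summing over `j`, the
residues `j * d2 % d1` run over `0, …, d1 - 1` again, so only `∑ j` and `∑ j ^ 2` remain.
-/

open Finset

lemma two_mul_sum_range_natCast (n : ℕ) : 2 * ∑ i ∈ range n, (i : ℤ) = n * (n - 1) := by
  induction n with
  | zero => simp
  | succ n ih =>
    rw [sum_range_succ]
    push_cast
    linear_combination ih

lemma six_mul_sum_range_natCast_sq (n : ℕ) :
    6 * ∑ i ∈ range n, (i : ℤ) ^ 2 = n * (n - 1) * (2 * n - 1) := by
  induction n with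
  | zero => simp
  | succ n ih =>
    rw [sum_range_succ]
    push_cast
    linear_combination ih

-- The summands are the numbers below `J` that are congruent to `J` modulo `d`.
lemma two_mul_mul_sum_progression_below (d J : ℕ) :
    2 * d * ∑ i ∈ range (J / d), (((J % d : ℕ) : ℤ) + i * d) =
      (J : ℤ) ^ 2 - ((J % d : ℕ) : ℤ) ^ 2 - d * J + d * (J % d : ℕ) := by
  have hJ : (d : ℤ) * (J / d : ℕ) + (J % d : ℕ) = J := by exact_mod_cast Nat.div_add_mod J d
  have hsum := two_mul_sum_range_natCast (J / d)
  rw [sum_add_distrib, sum_const, card_range, ← sum_mul, nsmul_eq_mul, ← hJ]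
  linear_combination (d : ℤ) ^ 2 * hsum

section TwoGenerators

variable {d1 d2 : ℕ}

lemma bijOn_mul_mod_of_coprime (hcop : d1.Coprime d2) :
    Set.BijOn (fun j ↦ j * d2 % d1) (range d1 : Set ℕ) (range d1 : Set ℕ) := by
  have hmaps : Set.MapsTo (fun j ↦ j * d2 % d1) (range d1 : Set ℕ) (range d1 : Set ℕ) := by
    intro j hj
    simp only [coe_range, Set.mem_Iio] at hj ⊢
    exact Nat.mod_lt _ (by omega)
  refine ((range d1).finite_toSet.injOn_iff_bijOn_of_mapsTo hmaps).mp ?_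
  intro a ha b hb hab
  simp only [coe_range, Set.mem_Iio] at ha hb
  exact (Nat.ModEq.cancel_right_of_coprime hcop hab).eq_of_lt_of_lt ha hb

lemma sum_range_mul_mod_of_coprime {M : Type*} [AddCommMonoid M] (hcop : d1.Coprime d2)
    (g : ℕ → M) : ∑ j ∈ range d1, g (j * d2 % d1) = ∑ j ∈ range d1, g j :=
  let h := bijOn_mul_mod_of_coprime hcop
  sum_nbij _ h.mapsTo h.injOn h.surjOn fun _ _ ↦ rfl

lemma representable_iff_le_of_mod_eq (hcop : d1.Coprime d2) {j s : ℕ} (hj : j < d1)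
    (hmod : j * d2 % d1 = s % d1) : (∃ x1 x2 : ℕ, s = x1 * d1 + x2 * d2) ↔ j * d2 ≤ s := by
  constructor
  · rintro ⟨x1, x2, rfl⟩
    have hx2 : x2 * d2 ≡ j * d2 [MOD d1] := by
      unfold Nat.ModEq
      rw [hmod, add_comm, Nat.add_mul_mod_self_right]
    have hjx2 : j ≤ x2 := by
      have := Nat.ModEq.cancel_right_of_coprime hcop hx2
      rw [Nat.ModEq, Nat.mod_eq_of_lt hj] at this
      exact this ▸ Nat.mod_le x2 d1
    nlinarith
  · intro hle
    obtain ⟨t, ht⟩ := (Nat.modEq_iff_dvd' hle).mp hmod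
    exact ⟨t, j, by rw [mul_comm t]; omega⟩

lemma not_representable_iff (hcop : d1.Coprime d2) (hd1 : 0 < d1) (s : ℕ) :
    (¬ ∃ x1 x2 : ℕ, s = x1 * d1 + x2 * d2) ↔
      ∃ j < d1, ∃ i < j * d2 / d1, j * d2 % d1 + i * d1 = s := by
  constructor
  · intro hs
    obtain ⟨j, hj, hmod⟩ := (bijOn_mul_mod_of_coprime hcop).surjOn
      (by simpa using Nat.mod_lt s hd1 : s % d1 ∈ (range d1 : Set ℕ))
    simp only [coe_range, Set.mem_Iio] at hj
    change j * d2 % d1 = s % d1 at hmod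
    have hlt := not_le.mp (mt (representable_iff_le_of_mod_eq hcop hj hmod).mpr hs)
    refine ⟨j, hj, s / d1, ?_, ?_⟩
    · by_contra! hge
      have := Nat.mul_le_mul_right d1 hge
      have := Nat.mod_add_div' s d1
      have := Nat.mod_add_div' (j * d2) d1
      omega
    · rw [hmod]; exact Nat.mod_add_div' s d1
  · rintro ⟨j, hj, i, hi, rfl⟩
    have hmod : j * d2 % d1 = (j * d2 % d1 + i * d1) % d1 := by simp
    rw [representable_iff_le_of_mod_eq hcop hj hmod, not_le]
    have hle := Nat.mul_le_mul_right d1 (Nat.succ_le_of_lt hi)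
    rw [Nat.succ_mul] at hle
    have := Nat.mod_add_div' (j * d2) d1
    omega

lemma injOn_sigma_mul_mod_add_mul (hcop : d1.Coprime d2) (hd1 : 0 < d1) :
    Set.InjOn (fun p : (_ : ℕ) × ℕ ↦ p.1 * d2 % d1 + p.2 * d1)
      ((range d1).sigma fun j ↦ range (j * d2 / d1) : Set ((_ : ℕ) × ℕ)) := by
  rintro ⟨j, i⟩ hp ⟨j', i'⟩ hq h
  simp only [coe_sigma, Set.mem_sigma_iff, coe_range, Set.mem_Iio] at hp hq h
  have hres : j * d2 % d1 = j' * d2 % d1 := by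
    simpa [Nat.add_mul_mod_self_right, Nat.mod_mod] using congrArg (· % d1) h
  obtain rfl : j = j' := (bijOn_mul_mod_of_coprime hcop).injOn (by simpa using hp.1)
    (by simpa using hq.1) hres
  obtain rfl : i = i' := Nat.eq_of_mul_eq_mul_right hd1 (by omega)
  rfl

end TwoGenerators

theorem power_sum_one_two_generators_general (d1 d2 : ℕ) (h1 : 1 < d1)
    (hcop : Nat.gcd d1 d2 = 1)
    (hfin : {s : ℕ | ¬ ∃ x1 x2 : ℕ, s = x1 * d1 + x2 * d2}.Finite) :
    (12 : ℤ) * ∑ s ∈ hfin.toFinset, (s : ℤ) =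
      ((d1 : ℤ) - 1) * ((d2 : ℤ) - 1) *
        (2 * (d1 : ℤ) * (d2 : ℤ) - (d1 : ℤ) - (d2 : ℤ) - 1) := by
  have hd1 : 0 < d1 := by omega
  have hgaps : hfin.toFinset = ((range d1).sigma fun j ↦ range (j * d2 / d1)).image
      fun p ↦ p.1 * d2 % d1 + p.2 * d1 := by
    ext s
    simp [not_representable_iff hcop hd1, and_assoc]
  rw [hgaps, sum_image (injOn_sigma_mul_mod_add_mul hcop hd1), sum_sigma]
  refine mul_left_cancel₀ (show (d1 : ℤ) ≠ 0 by positivity) ?_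
  calc (d1 : ℤ) * (12 * ∑ j ∈ range d1, ∑ i ∈ range (j * d2 / d1),
          ((j * d2 % d1 + i * d1 : ℕ) : ℤ))
      = 6 * ∑ j ∈ range d1, (((j * d2 : ℕ) : ℤ) ^ 2 - ((j * d2 % d1 : ℕ) : ℤ) ^ 2
          - d1 * (j * d2 : ℕ) + d1 * (j * d2 % d1 : ℕ)) := by
        rw [← sum_congr rfl fun j _ ↦ two_mul_mul_sum_progression_below d1 (j * d2)]
        simp only [mul_sum, Nat.cast_add, Nat.cast_mul]
        exact sum_congr rfl fun _ _ ↦ sum_congr rfl fun _ _ ↦ by ring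
    _ = _ := by
        simp only [sum_add_distrib, sum_sub_distrib, ← mul_sum, ← sum_mul, Nat.cast_mul, mul_pow]
        rw [sum_range_mul_mod_of_coprime hcop fun r ↦ (r : ℤ) ^ 2,
          sum_range_mul_mod_of_coprime hcop fun r ↦ (r : ℤ)]
        linear_combination ((d2 : ℤ) ^ 2 - 1) * six_mul_sum_range_natCast_sq d1
          - 3 * d1 * (d2 - 1) * two_mul_sum_range_natCast d1

theorem power_sum_one_two_generators (d1 d2 : ℕ) (h1 : 1 < d1) (h12 : d1 < d2)
    (hcop : Nat.gcd d1 d2 = 1)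
    (hfin : {s : ℕ | ¬ ∃ x1 x2 : ℕ, s = x1 * d1 + x2 * d2}.Finite) :
    (12 : ℤ) * ∑ s ∈ hfin.toFinset, (s : ℤ) =
      ((d1 : ℤ) - 1) * ((d2 : ℤ) - 1) *
        (2 * (d1 : ℤ) * (d2 : ℤ) - (d1 : ℤ) - (d2 : ℤ) - 1) :=
  power_sum_one_two_generators_general d1 d2 h1 hcop hfin
end

section
/- Let d1, d2 be coprime integers with 1 < d1 < d2, and let Δ(d1,d2) be the set of nonrepresentable integers. Then the sum of squares of the elements of Δ(d1,d2) equals (1/12)(d1−1)(d2−1)·d1·d2·(d1·d2 − d1 − d2). -/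
/-!
Every `s ∈ gaps a b` is uniquely `y * b - z * a` with `1 ≤ y < a`, `1 ≤ z < b`, `z * a < y * b`:
take `y < a` with `y * b ≡ s [MOD a]`; then `s` is a gap exactly when `s < y * b`. Swapping
`a` and `b` accounts for the grid points with `y * b < z * a`, and coprimality excludes
`y * b = z * a`, so the sum of `(y * b - z * a) ^ 2` over the grid `[1, a) × [1, b)` is twice
the sum of the squares of the gaps. The grid sum is a polynomial in `a, b` via `∑ i` and `∑ i²`.
-/

open Finset

def gaps (a b : ℕ) : Set ℕ := {s | ¬ ∃ x1 x2 : ℕ, s = x1 * a + x2 * b}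

def gapPairs (a b : ℕ) : Finset (ℕ × ℕ) :=
  {p ∈ Ico 1 a ×ˢ Ico 1 b | p.2 * a < p.1 * b}

lemma gaps_comm (a b : ℕ) : gaps a b = gaps b a := by
  ext s
  simp only [gaps, Set.mem_ofPred_eq]
  rw [exists_comm]
  simp only [add_comm]

lemma Nat.Coprime.eq_of_mul_add_mul_eq {a b y y' m m' : ℕ} (hab : a.Coprime b) (hy : y < a)
    (hy' : y' < a) (h : y * b + m * a = y' * b + m' * a) : y = y' := by
  have hmod : y * b ≡ y' * b [MOD a] := by
    simpa [Nat.ModEq, Nat.add_mul_mod_self_right] using congrArg (· % a) h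
  exact (hmod.cancel_right_of_coprime hab).eq_of_lt_of_lt hy hy'

section
variable {a b : ℕ}

lemma Nat.Coprime.exists_lt_modEq_mul (hab : a.Coprime b) (ha : 0 < a) (s : ℕ) :
    ∃ y < a, s ≡ y * b [MOD a] := by
  have : NeZero a := ⟨ha.ne'⟩
  refine ⟨((s : ZMod a) * (ZMod.unitOfCoprime b hab.symm)⁻¹).val, ZMod.val_lt _, ?_⟩
  rw [← ZMod.natCast_eq_natCast_iff, Nat.cast_mul, ZMod.natCast_val, ZMod.cast_id', id,
    mul_assoc, ← ZMod.coe_unitOfCoprime b hab.symm, Units.inv_mul, mul_one]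

lemma mapsTo_gapPairs (hab : a.Coprime b) :
    Set.MapsTo (fun p : ℕ × ℕ ↦ p.1 * b - p.2 * a) (gapPairs a b) (gaps a b) := by
  rintro ⟨y, z⟩ hp ⟨x1, x2, hx⟩
  simp only [gapPairs, coe_filter, mem_product, mem_Ico, Set.mem_ofPred_eq] at hp hx
  obtain ⟨⟨⟨hy1, hya⟩, hz1, -⟩, hlt⟩ := hp
  have hx2 : x2 < y := by
    by_contra! h
    have hle := Nat.mul_le_mul_right b h
    have hpos : 0 < z * a := Nat.mul_pos hz1 (by omega)
    omega
  have := hab.eq_of_mul_add_mul_eq hya (hx2.trans hya) (m := 0) (m' := x1 + z) (by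
    rw [add_mul]; omega)
  omega

lemma injOn_gapPairs (hab : a.Coprime b) :
    Set.InjOn (fun p : ℕ × ℕ ↦ p.1 * b - p.2 * a) (gapPairs a b) := by
  rintro ⟨y, z⟩ hp ⟨y', z'⟩ hp' h
  simp only [gapPairs, coe_filter, mem_product, mem_Ico, Set.mem_ofPred_eq] at hp hp' h
  have hyy' : y = y' :=
    hab.eq_of_mul_add_mul_eq hp.1.1.2 hp'.1.1.2 (m := z') (m' := z) (by omega)
  subst hyy'
  have : z * a = z' * a := by omega
  simp [Nat.eq_of_mul_eq_mul_right (by omega) this]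

lemma surjOn_gapPairs (hab : a.Coprime b) :
    Set.SurjOn (fun p : ℕ × ℕ ↦ p.1 * b - p.2 * a) (gapPairs a b) (gaps a b) := by
  intro s hs
  rcases Nat.eq_zero_or_pos a with rfl | ha
  · obtain rfl : b = 1 := by simpa using hab
    exact absurd ⟨0, s, by simp⟩ hs
  obtain ⟨y, hya, hmod⟩ := hab.exists_lt_modEq_mul ha s
  have hs0 : 0 < s := Nat.pos_of_ne_zero (by rintro rfl; exact hs ⟨0, 0, by simp⟩)
  have hlt : s < y * b := by
    by_contra! hle
    obtain ⟨k, hk⟩ := (Nat.modEq_iff_dvd' hle).mp hmod.symm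
    exact hs ⟨k, y, by rw [mul_comm k]; omega⟩
  obtain ⟨z, hz⟩ := (Nat.modEq_iff_dvd' hlt.le).mp hmod
  have hy : 0 < y := Nat.pos_of_ne_zero (by rintro rfl; omega)
  have hz0 : 0 < z := Nat.pos_of_ne_zero (by rintro rfl; omega)
  have hzb : z < b := by
    have hb : 0 < b := Nat.pos_of_ne_zero (by rintro rfl; omega)
    have := Nat.mul_lt_mul_of_pos_right hya hb
    exact Nat.lt_of_mul_lt_mul_left (a := a) (by omega)
  refine ⟨(y, z), ?_, ?_⟩
  · simp only [gapPairs, coe_filter, mem_product, mem_Ico, Set.mem_ofPred_eq]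
    exact ⟨⟨⟨hy, hya⟩, hz0, hzb⟩, by rw [mul_comm]; omega⟩
  · simp only
    rw [mul_comm z]; omega

lemma bijOn_gapPairs (hab : a.Coprime b) :
    Set.BijOn (fun p : ℕ × ℕ ↦ p.1 * b - p.2 * a) (gapPairs a b) (gaps a b) :=
  ⟨mapsTo_gapPairs hab, injOn_gapPairs hab, surjOn_gapPairs hab⟩

variable {M : Type*} [AddCommMonoid M]

lemma sum_gapPairs_eq (hab : a.Coprime b) {D : Finset ℕ} (hD : (D : Set ℕ) = gaps a b)
    (f : ℕ → M) :
    ∑ p ∈ gapPairs a b, f (p.1 * b - p.2 * a) = ∑ s ∈ D, f s := by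
  have h := bijOn_gapPairs hab
  rw [← hD] at h
  exact sum_nbij _ h.mapsTo h.injOn h.surjOn fun _ _ ↦ rfl

lemma sum_grid_natAbs_eq_two_nsmul (hab : a.Coprime b) {D : Finset ℕ}
    (hD : (D : Set ℕ) = gaps a b) (f : ℕ → M) :
    ∑ p ∈ Ico 1 a ×ˢ Ico 1 b, f ((p.1 * b : ℤ) - p.2 * a).natAbs = 2 • ∑ s ∈ D, f s := by
  have hne : ∀ p ∈ Ico 1 a ×ˢ Ico 1 b, p.1 * b ≠ p.2 * a := by
    rintro ⟨y, z⟩ hp h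
    simp only [mem_product, mem_Ico] at hp
    have := hab.eq_of_mul_add_mul_eq hp.1.2 (by omega : 0 < a) (m := 0) (m' := z)
      (by simpa using h)
    omega
  rw [← sum_filter_add_sum_filter_not _ (fun p ↦ p.2 * a < p.1 * b), two_smul]
  congr 1
  · rw [← sum_gapPairs_eq hab hD]
    refine sum_congr rfl fun p hp ↦ ?_
    simp only [gapPairs, mem_filter] at hp
    congr 1
    omega
  · rw [← sum_gapPairs_eq hab.symm (hD.trans (gaps_comm a b)) f]
    refine sum_equiv (Equiv.prodComm ℕ ℕ) (fun p ↦ ?_) fun p hp ↦ ?_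
    · simp only [gapPairs, mem_filter, mem_product, Equiv.prodComm_apply, Prod.fst_swap,
        Prod.snd_swap]
      constructor
      · rintro ⟨hp, hlt⟩
        have := hne p (mem_product.2 hp)
        exact ⟨hp.symm, by omega⟩
      · rintro ⟨hp, hlt⟩
        exact ⟨hp.symm, by omega⟩
    · simp only [Equiv.prodComm_apply, Prod.fst_swap, Prod.snd_swap]
      congr 1
      simp only [mem_filter] at hp
      omega
end

lemma two_mul_sum_Ico_one_id (n : ℕ) : 2 * ∑ i ∈ Ico 1 n, (i : ℤ) = n * (n - 1) := by
  induction n with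
  | zero => simp
  | succ n ih =>
    rcases Nat.eq_zero_or_pos n with rfl | hn
    · simp
    rw [sum_Ico_succ_top hn]
    push_cast
    linear_combination ih

lemma six_mul_sum_Ico_one_sq (n : ℕ) :
    6 * ∑ i ∈ Ico 1 n, (i : ℤ) ^ 2 = n * (n - 1) * (2 * n - 1) := by
  induction n with
  | zero => simp
  | succ n ih =>
    rcases Nat.eq_zero_or_pos n with rfl | hn
    · simp
    rw [sum_Ico_succ_top hn]
    push_cast
    linear_combination ih

lemma six_mul_sum_grid_sq (a b : ℕ) :
    6 * ∑ p ∈ Ico 1 a ×ˢ Ico 1 b, ((p.1 : ℤ) * b - p.2 * a) ^ 2 =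
      ((a : ℤ) - 1) * (b - 1) * a * b * (a * b - a - b) := by
  have hcard (n : ℕ) : (#(Ico 1 n) : ℤ) * n = (n - 1) * n := by
    rcases n with _ | n <;> simp
  have hexpand : ∑ p ∈ Ico 1 a ×ˢ Ico 1 b, ((p.1 : ℤ) * b - p.2 * a) ^ 2 =
      #(Ico 1 b) * b ^ 2 * ∑ y ∈ Ico 1 a, (y : ℤ) ^ 2
        - 2 * a * b * (∑ y ∈ Ico 1 a, (y : ℤ)) * ∑ z ∈ Ico 1 b, (z : ℤ)
        + #(Ico 1 a) * a ^ 2 * ∑ z ∈ Ico 1 b, (z : ℤ) ^ 2 := by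
    simp only [sum_product, sub_sq, sum_add_distrib, sum_sub_distrib, sum_const, nsmul_eq_mul,
      mul_pow, ← mul_sum, ← sum_mul]
    ring
  rw [hexpand]
  linear_combination (#(Ico 1 b) : ℤ) * b ^ 2 * six_mul_sum_Ico_one_sq a
    + b * a * (a - 1) * (2 * a - 1) * hcard b
    - 3 * a * b * (2 * ∑ z ∈ Ico 1 b, (z : ℤ)) * two_mul_sum_Ico_one_id a
    - 3 * a * b * a * (a - 1) * two_mul_sum_Ico_one_id b
    + (#(Ico 1 a) : ℤ) * a ^ 2 * six_mul_sum_Ico_one_sq b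
    + a * b * (b - 1) * (2 * b - 1) * hcard a

theorem power_sum_two_two_generators_general (d1 d2 : ℕ)
    (hcop : Nat.gcd d1 d2 = 1)
    (hfin : {s : ℕ | ¬ ∃ x1 x2 : ℕ, s = x1 * d1 + x2 * d2}.Finite) :
    (12 : ℤ) * ∑ s ∈ hfin.toFinset, (s : ℤ) ^ 2 =
      ((d1 : ℤ) - 1) * ((d2 : ℤ) - 1) * (d1 : ℤ) * (d2 : ℤ) *
        ((d1 : ℤ) * (d2 : ℤ) - (d1 : ℤ) - (d2 : ℤ)) := by
  have hgrid := sum_grid_natAbs_eq_two_nsmul hcop hfin.coe_toFinset fun s ↦ (s : ℤ) ^ 2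
  simp only [Int.natCast_natAbs, sq_abs, nsmul_eq_mul, Nat.cast_ofNat] at hgrid
  linear_combination 6 * hgrid.symm + six_mul_sum_grid_sq d1 d2

theorem power_sum_two_two_generators (d1 d2 : ℕ) (h1 : 1 < d1) (h12 : d1 < d2)
    (hcop : Nat.gcd d1 d2 = 1)
    (hfin : {s : ℕ | ¬ ∃ x1 x2 : ℕ, s = x1 * d1 + x2 * d2}.Finite) :
    (12 : ℤ) * ∑ s ∈ hfin.toFinset, (s : ℤ) ^ 2 =
      ((d1 : ℤ) - 1) * ((d2 : ℤ) - 1) * (d1 : ℤ) * (d2 : ℤ) *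
        ((d1 : ℤ) * (d2 : ℤ) - (d1 : ℤ) - (d2 : ℤ)) :=
  power_sum_two_two_generators_general d1 d2 hcop hfin
end

section
/- Let d1, d2 be coprime with 1 < d1 < d2 and Δ(d1,d2) the set of nonrepresentable integers. For every n ≥ 0, Σ_{s ∈ Δ} sⁿ = (1/((n+1)(n+2))) · Σ_{k=0}^{n+1} Σ_{l=0}^{n+1−k} C(n+2,k)·C(n+2−k,l)·B_k·B_l·d1^{n+1−k}·d2^{n+1−l} − B_{n+1}/(n+1), where B_k are the Bernoulli numbers. -/
/-!
A number is representable iff it is `x * d1 + y * d2` with `x < d2` and `y ≥ 0`, and this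
normal form is unique by coprimality. Hence the representable numbers have generating function
`(1 - X ^ (d1 * d2)) / ((1 - X ^ d1) * (1 - X ^ d2))`, and the gaps have the polynomial
generating function `1 / (1 - X) - (1 - X ^ (d1 * d2)) / ((1 - X ^ d1) * (1 - X ^ d2))`.
Substituting `X = e ^ t` and clearing the three denominators with `(e ^ (c * t) - 1) * B(c * t) = c * t`,
where `B(t) = t / (e ^ t - 1)`, gives an identity of exponential generating functions; the
coefficient of `t ^ (n + 2)` of the gap side is `d1 * d2 * ∑ s ^ n / n !`.
-/

open PowerSeries Finset
open scoped Nat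

def Representable (a b s : ℕ) : Prop := ∃ x1 x2 : ℕ, s = x1 * a + x2 * b

section Representable

variable {a b m : ℕ}

theorem representable_iff_exists_lt_or_sub (ha : 0 < a) :
    Representable a b m ↔ (∃ x < b, x * a = m) ∨ (b ≤ m ∧ Representable a b (m - b)) := by
  constructor
  · rintro ⟨x1, x2, rfl⟩
    rcases x2 with _ | y
    · by_cases hx : x1 < b
      · exact .inl ⟨x1, hx, by simp⟩
      obtain ⟨z, rfl⟩ := Nat.exists_eq_add_of_le (not_lt.mp hx)
      obtain ⟨c, rfl⟩ := Nat.exists_eq_add_of_lt ha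
      refine .inr ⟨by nlinarith, z, c, ?_⟩
      rw [Nat.sub_eq_of_eq_add]
      ring
    · exact .inr ⟨by nlinarith, x1, y, by rw [Nat.sub_eq_of_eq_add]; ring⟩
  · rintro (⟨x, -, rfl⟩ | ⟨hle, x1, x2, hx⟩)
    · exact ⟨x, 0, by simp⟩
    · exact ⟨x1, x2 + 1, by rw [add_mul, one_mul, ← add_assoc, ← hx, Nat.sub_add_cancel hle]⟩

theorem not_representable_sub_mul (ha : 0 < a) (hab : Nat.Coprime a b) {x : ℕ} (hx : x < b) :
    ¬ (b ≤ x * a ∧ Representable a b (x * a - b)) := by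
  rintro ⟨hle, y1, y2, hy⟩
  have key : x * a = y1 * a + (y2 + 1) * b := by
    rw [add_mul, one_mul, ← add_assoc, ← hy, Nat.sub_add_cancel hle]
  have hdvd : a ∣ y2 + 1 :=
    hab.dvd_of_dvd_mul_right <| (Nat.dvd_add_right (dvd_mul_left a y1)).mp (key ▸ dvd_mul_left a x)
  have := Nat.le_of_dvd y2.succ_pos hdvd
  nlinarith

end Representable

section GeneratingSeries

variable {R : Type*} [CommRing R]

theorem coeff_sum_X_pow (s : Finset ℕ) (m : ℕ) :
    coeff m (∑ i ∈ s, X ^ i : R⟦X⟧) = if m ∈ s then 1 else 0 := by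
  simp [coeff_X_pow]

variable (R) in
open Classical in
noncomputable def representableSeries (a b : ℕ) : R⟦X⟧ :=
  mk fun m => if Representable a b m then 1 else 0

theorem representableSeries_mul_one_sub_X_pow {a b : ℕ} (ha : 0 < a) (hab : Nat.Coprime a b) :
    representableSeries R a b * (1 - X ^ b) = ∑ x ∈ range b, (X ^ a) ^ x := by
  classical
  have hmul : Function.Injective (· * a) := fun _ _ h => Nat.eq_of_mul_eq_mul_right ha h
  rw [show ∑ x ∈ range b, (X ^ a : R⟦X⟧) ^ x = ∑ i ∈ (range b).map ⟨_, hmul⟩, X ^ i by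
    simp [← pow_mul, mul_comm]]
  ext m
  rw [mul_sub, mul_one, map_sub, coeff_mul_X_pow', coeff_sum_X_pow, representableSeries, coeff_mk]
  have hmem : m ∈ (range b).map ⟨_, hmul⟩ ↔ ∃ x < b, x * a = m := by simp
  rw [if_congr hmem rfl rfl]
  by_cases hsmall : ∃ x < b, x * a = m
  · obtain ⟨x, hx, rfl⟩ := hsmall
    have hrep : Representable a b (x * a) := (representable_iff_exists_lt_or_sub ha).mpr (.inl ⟨x, hx, rfl⟩)
    have hsub := not_representable_sub_mul ha hab hx
    by_cases hle : b ≤ x * a <;> simp_all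
  · have hrep : Representable a b m ↔ b ≤ m ∧ Representable a b (m - b) := by
      rw [representable_iff_exists_lt_or_sub ha, or_iff_right hsmall]
    by_cases hle : b ≤ m <;> simp [hsmall, hrep, hle]

theorem sum_X_pow_add_representableSeries {a b : ℕ} {F : Finset ℕ}
    (hF : ∀ s, s ∈ F ↔ ¬ Representable a b s) :
    ∑ s ∈ F, X ^ s + representableSeries R a b = PowerSeries.mk 1 := by
  classical
  ext m
  rw [map_add, coeff_sum_X_pow, representableSeries, coeff_mk, coeff_mk]
  by_cases hm : Representable a b m <;> simp [hF, hm]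

theorem PowerSeries.sum_X_pow_gaps_mul {a b : ℕ} (ha : 0 < a) (hab : Nat.Coprime a b) {F : Finset ℕ}
    (hF : ∀ s, s ∈ F ↔ ¬ Representable a b s) :
    (∑ s ∈ F, X ^ s : R⟦X⟧) * ((1 - X ^ a) * (1 - X ^ b) * (1 - X)) =
      (1 - X ^ a) * (1 - X ^ b) - (1 - X ^ (a * b)) * (1 - X) := by
  have hgeom : (1 - X ^ a) * ∑ x ∈ range b, (X ^ a : R⟦X⟧) ^ x = 1 - X ^ (a * b) := by
    rw [mul_neg_geom_sum, pow_mul]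
  rw [eq_sub_of_add_eq (sum_X_pow_add_representableSeries (R := R) hF)]
  linear_combination (1 - X ^ a) * (1 - X ^ b) * mk_one_mul_one_sub_eq_one R -
    (1 - X ^ a) * (1 - X) * representableSeries_mul_one_sub_X_pow (R := R) ha hab -
    (1 - X) * hgeom

end GeneratingSeries

theorem Polynomial.sum_X_pow_gaps_mul {R : Type*} [CommRing R] {a b : ℕ} (ha : 0 < a) (hab : Nat.Coprime a b)
    {F : Finset ℕ} (hF : ∀ s, s ∈ F ↔ ¬ Representable a b s) :
    (∑ s ∈ F, Polynomial.X ^ s : Polynomial R) *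
        ((1 - Polynomial.X ^ a) * (1 - Polynomial.X ^ b) * (1 - Polynomial.X)) =
      (1 - Polynomial.X ^ a) * (1 - Polynomial.X ^ b) -
        (1 - Polynomial.X ^ (a * b)) * (1 - Polynomial.X) := by
  apply Polynomial.coe_injective R
  have hcoe : ∀ p : Polynomial R, (p : R⟦X⟧) = Polynomial.coeToPowerSeries.ringHom p := fun _ => rfl
  simp only [hcoe, map_mul, map_sub, map_one, map_pow, map_sum]
  simp only [← hcoe, Polynomial.coe_X]
  exact PowerSeries.sum_X_pow_gaps_mul ha hab hF

section Exponential

variable {A : Type*} [CommRing A] [Algebra ℚ A]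

theorem exp_pow_sub_one_mul_rescale_bernoulliPowerSeries (c : ℕ) :
    (exp A ^ c - 1) * rescale (c : A) (bernoulliPowerSeries A) = C (c : A) * X := by
  rw [exp_pow_eq_rescale_exp, ← map_one (rescale (c : A)), ← map_sub, ← map_mul, mul_comm,
    bernoulliPowerSeries_mul_exp_sub_one, rescale_X]

theorem C_mul_X_sq_mul_sum_exp_pow_gaps {a b : ℕ} (ha : 0 < a) (hab : Nat.Coprime a b)
    {F : Finset ℕ} (hF : ∀ s, s ∈ F ↔ ¬ Representable a b s) :
    C ((a : A) * b) * X ^ 2 * ∑ s ∈ F, exp A ^ s =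
      rescale (b : A) (bernoulliPowerSeries A) *
          (rescale (a : A) (bernoulliPowerSeries A) * (exp A ^ (a * b) - 1)) -
        C ((a : A) * b) * X * bernoulliPowerSeries A := by
  set B := bernoulliPowerSeries A
  set H := ∑ s ∈ F, exp A ^ s
  have hP := congrArg (Polynomial.aeval (exp A)) (Polynomial.sum_X_pow_gaps_mul (R := A) ha hab hF)
  simp only [map_mul, map_sub, map_one, map_pow, map_sum, Polynomial.aeval_X] at hP
  have hcleared : H * ((exp A ^ a - 1) * rescale (a : A) B) * ((exp A ^ b - 1) * rescale (b : A) B) *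
        ((exp A - 1) * B) + ((exp A ^ a - 1) * rescale (a : A) B) *
        ((exp A ^ b - 1) * rescale (b : A) B) * B =
      rescale (b : A) B * rescale (a : A) B * (exp A ^ (a * b) - 1) * ((exp A - 1) * B) := by
    linear_combination (-(B * rescale (a : A) B * rescale (b : A) B)) * hP
  rw [exp_pow_sub_one_mul_rescale_bernoulliPowerSeries, exp_pow_sub_one_mul_rescale_bernoulliPowerSeries,
    mul_comm (exp A - 1), bernoulliPowerSeries_mul_exp_sub_one] at hcleared
  apply X_mul_cancel
  rw [map_mul]
  linear_combination hcleared

end Exponential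

section ExponentialGeneratingFunction

variable {K : Type*} [Field K]

noncomputable def egf (f : ℕ → K) : K⟦X⟧ :=
  mk fun n => f n / n !

@[simp]
theorem coeff_egf (f : ℕ → K) (n : ℕ) : coeff n (egf f) = f n / n ! :=
  coeff_mk _ _

theorem egf_mul [CharZero K] (f g : ℕ → K) :
    egf f * egf g = egf fun n => ∑ p ∈ antidiagonal n, n.choose p.1 * f p.1 * g p.2 := by
  ext n
  simp only [coeff_mul, coeff_egf, sum_div]
  refine sum_congr rfl fun p hp => ?_
  rw [← mem_antidiagonal.mp hp, Nat.cast_add_choose]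
  have := (p.1 + p.2).factorial_ne_zero
  field_simp

theorem rescale_egf (c : K) (f : ℕ → K) : rescale c (egf f) = egf fun k => c ^ k * f k := by
  ext k
  simp [mul_div_assoc]

end ExponentialGeneratingFunction

theorem bernoulliPowerSeries_eq_egf : bernoulliPowerSeries ℚ = egf bernoulli := by
  ext k
  simp [bernoulliPowerSeries]

theorem exp_pow_sub_one_eq_egf (c : ℕ) :
    exp ℚ ^ c - 1 = egf fun m => if m = 0 then 0 else (c : ℚ) ^ m := by
  ext m
  rw [exp_pow_eq_rescale_exp, map_sub, coeff_rescale, coeff_exp, coeff_one, coeff_egf]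
  rcases m with _ | m <;> simp [div_eq_mul_inv]

theorem coeff_sum_exp_pow (F : Finset ℕ) (n : ℕ) :
    coeff n (∑ s ∈ F, exp ℚ ^ s) = (∑ s ∈ F, (s : ℚ) ^ n) / n ! := by
  simp [exp_pow_eq_rescale_exp, div_eq_mul_inv, sum_mul]

theorem sum_antidiagonal_sum_antidiagonal_ite {M : Type*} [AddCommMonoid M] (N : ℕ)
    (f : ℕ → ℕ → ℕ → ℕ → M) :
    ∑ p ∈ antidiagonal N, ∑ q ∈ antidiagonal p.2, (if q.2 = 0 then 0 else f p.1 p.2 q.1 q.2) =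
      ∑ k ∈ range N, ∑ l ∈ range (N - k), f k (N - k) l (N - k - l) := by
  rw [Nat.sum_antidiagonal_eq_sum_range_succ_mk, sum_range_succ]
  simp only [Nat.sub_self, Nat.antidiagonal_zero, sum_singleton, if_pos, add_zero]
  refine sum_congr rfl fun k _ => ?_
  rw [Nat.sum_antidiagonal_eq_sum_range_succ (fun l m => if m = 0 then 0 else f k (N - k) l m),
    sum_range_succ, Nat.sub_self, if_pos rfl, add_zero]
  exact sum_congr rfl fun l hl => if_neg (by simp at hl; omega)

theorem sum_bernoulli_convolution (n a b : ℕ) :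
    ∑ p ∈ antidiagonal (n + 2), ∑ q ∈ antidiagonal p.2,
      (if q.2 = 0 then 0 else ((n + 2).choose p.1 : ℚ) * (b ^ p.1 * bernoulli p.1) *
        ((p.2.choose q.1 : ℚ) * (a ^ q.1 * bernoulli q.1) * ((a * b : ℕ) : ℚ) ^ q.2)) =
      a * b * ∑ k ∈ range (n + 2), ∑ l ∈ range (n + 2 - k),
        ((n + 2).choose k : ℚ) * ((n + 2 - k).choose l : ℚ) *
          bernoulli k * bernoulli l * (a : ℚ) ^ (n + 1 - k) * (b : ℚ) ^ (n + 1 - l) := by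
  refine (sum_antidiagonal_sum_antidiagonal_ite (n + 2) fun k r l m =>
    ((n + 2).choose k : ℚ) * (b ^ k * bernoulli k) *
      ((r.choose l : ℚ) * (a ^ l * bernoulli l) * ((a * b : ℕ) : ℚ) ^ m)).trans ?_
  simp only [mul_sum]
  refine sum_congr rfl fun k hk => sum_congr rfl fun l hl => ?_
  obtain ⟨m, hm⟩ : ∃ m, n + 1 = k + l + m := ⟨n + 1 - k - l, by simp at hk hl; omega⟩
  rw [show n + 2 - k - l = m + 1 by omega, show n + 1 - k = l + m by omega,
    show n + 1 - l = k + m by omega]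
  push_cast
  ring

theorem power_sum_general_two_generators (d1 d2 : ℕ) (h1 : 1 < d1) (h12 : d1 < d2)
    (hcop : Nat.gcd d1 d2 = 1)
    (hfin : {s : ℕ | ¬ ∃ x1 x2 : ℕ, s = x1 * d1 + x2 * d2}.Finite) (n : ℕ) :
    ∑ s ∈ hfin.toFinset, (s : ℚ) ^ n =
      (1 / (((n : ℚ) + 1) * ((n : ℚ) + 2))) *
        ∑ k ∈ Finset.range (n + 2), ∑ l ∈ Finset.range (n + 2 - k),
          ((n + 2).choose k : ℚ) * ((n + 2 - k).choose l : ℚ) *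
            bernoulli k * bernoulli l * (d1 : ℚ) ^ (n + 1 - k) * (d2 : ℚ) ^ (n + 1 - l)
      - bernoulli (n + 1) / ((n : ℚ) + 1) := by
  have hF : ∀ s, s ∈ hfin.toFinset ↔ ¬ Representable d1 d2 s := fun s => hfin.mem_toFinset
  have h := congrArg (coeff (n + 2)) (C_mul_X_sq_mul_sum_exp_pow_gaps (A := ℚ) (by omega) hcop hF)
  rw [bernoulliPowerSeries_eq_egf, rescale_egf, rescale_egf, exp_pow_sub_one_eq_egf, egf_mul, egf_mul,
    map_sub, coeff_egf, mul_assoc, mul_assoc, coeff_C_mul, coeff_C_mul, coeff_X_pow_mul,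
    coeff_sum_exp_pow, coeff_succ_X_mul, coeff_egf] at h
  simp only [mul_sum, mul_ite, mul_zero] at h
  rw [sum_bernoulli_convolution] at h
  have hd1 : (d1 : ℚ) ≠ 0 := Nat.cast_ne_zero.mpr (by omega)
  have hd2 : (d2 : ℚ) ≠ 0 := Nat.cast_ne_zero.mpr (by omega)
  rw [Nat.factorial_succ, Nat.factorial_succ] at h
  push_cast at h
  field_simp at h ⊢
  linear_combination h
end

section
/- Let d1, d2 be coprime with 1 < d1 < d2. As formal power series (or for |z|<1), Σ_{s ∈ Δ(d1,d2)} z^s = 1/(1−z) − (1 − z^{d1 d2})/((1 − z^{d1})(1 − z^{d2})). -/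
/-!
The semigroup `S = ⟨d1, d2⟩` is closed under adding `d1`, and by coprimality its Apéry set
`S \ (S + d1)` is `{i * d2 | i < d1}`. Hence `S(X) * (1 - X^d1) = ∑_{i < d1} X^(i * d2)`, and
multiplying by `1 - X^d2` telescopes this geometric sum to `1 - X^(d1 * d2)`. The gaps form the
complement of `S`, whose series is `1 / (1 - X) - S(X)`.
-/

open PowerSeries

noncomputable def indicatorSeries (R : Type*) [Semiring R] (S : Set ℕ) : R⟦X⟧ :=
  mk (S.indicator 1)

section IndicatorSeries

variable (R : Type*)

@[simp]
theorem coeff_indicatorSeries [Semiring R] (S : Set ℕ) (n : ℕ) :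
    coeff n (indicatorSeries R S) = S.indicator 1 n :=
  coeff_mk _ _

theorem indicatorSeries_univ [Semiring R] : indicatorSeries R Set.univ = mk 1 := by
  rw [indicatorSeries, Set.indicator_univ]

theorem indicatorSeries_finset [Semiring R] (t : Finset ℕ) :
    indicatorSeries R ↑t = ∑ n ∈ t, X ^ n := by
  ext m
  simp [Set.indicator_apply, coeff_X_pow]

theorem indicatorSeries_sdiff [Ring R] {S T : Set ℕ} (h : T ⊆ S) :
    indicatorSeries R (S \ T) = indicatorSeries R S - indicatorSeries R T := by
  ext n
  simp [Set.indicator_sdiff h]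

theorem indicatorSeries_compl [Ring R] (S : Set ℕ) :
    indicatorSeries R Sᶜ = mk 1 - indicatorSeries R S := by
  rw [Set.compl_eq_univ_sdiff, indicatorSeries_sdiff R (Set.subset_univ S), indicatorSeries_univ]

theorem indicatorSeries_image_add [Semiring R] (S : Set ℕ) (d : ℕ) :
    indicatorSeries R ((· + d) '' S) = indicatorSeries R S * X ^ d := by
  ext n
  rw [coeff_mul_X_pow', coeff_indicatorSeries, coeff_indicatorSeries]
  split_ifs with h
  · obtain ⟨m, rfl⟩ := Nat.exists_eq_add_of_le' h
    rw [Nat.add_sub_cancel, Set.indicator_image (add_left_injective d)]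
    rfl
  · refine Set.indicator_of_notMem ?_ _
    rintro ⟨m, -, rfl⟩
    exact h (Nat.le_add_left d m)

def aperySet (S : Set ℕ) (d : ℕ) : Set ℕ :=
  S \ (· + d) '' S

theorem indicatorSeries_aperySet [Ring R] {S : Set ℕ} {d : ℕ} (h : (· + d) '' S ⊆ S) :
    indicatorSeries R (aperySet S d) = indicatorSeries R S * (1 - X ^ d) := by
  rw [aperySet, indicatorSeries_sdiff R h, indicatorSeries_image_add, mul_sub, mul_one]

end IndicatorSeries

def twoGenSemigroup (d1 d2 : ℕ) : Set ℕ :=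
  {n | ∃ x1 x2 : ℕ, n = x1 * d1 + x2 * d2}

section TwoGenSemigroup

variable {d1 d2 : ℕ}

theorem image_add_left_subset_twoGenSemigroup :
    (· + d1) '' twoGenSemigroup d1 d2 ⊆ twoGenSemigroup d1 d2 := by
  rintro _ ⟨_, ⟨x1, x2, rfl⟩, rfl⟩
  exact ⟨x1 + 1, x2, by ring⟩

/-- `(i - y2) * d2 = (y1 + 1) * d1` and coprimality force `d1 ∣ i - y2`, impossible for
`0 < i - y2 < d1`. -/
theorem mul_mem_aperySet_twoGenSemigroup (hcop : Nat.Coprime d1 d2) {i : ℕ} (hi : i < d1) :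
    i * d2 ∈ aperySet (twoGenSemigroup d1 d2) d1 := by
  refine ⟨⟨0, i, by ring⟩, ?_⟩
  rintro ⟨_, ⟨y1, y2, rfl⟩, heq⟩
  have hy2 : y2 < i := by
    by_contra! h
    nlinarith [Nat.mul_le_mul_right d2 h]
  have hdvd : d1 ∣ (i - y2) * d2 := ⟨y1 + 1, by
    rw [Nat.sub_mul]
    exact Nat.sub_eq_of_eq_add (by rw [← heq]; ring)⟩
  have := Nat.le_of_dvd (by omega) (hcop.dvd_of_dvd_mul_right hdvd)
  omega

theorem exists_eq_mul_of_mem_aperySet_twoGenSemigroup (hd2 : 0 < d2) {n : ℕ}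
    (hn : n ∈ aperySet (twoGenSemigroup d1 d2) d1) :
    ∃ i < d1, n = i * d2 := by
  obtain ⟨⟨x1, x2, rfl⟩, hnot⟩ := hn
  obtain rfl | hx1 := Nat.eq_zero_or_pos x1
  · refine ⟨x2, ?_, by ring⟩
    by_contra! hx2
    -- `x2 * d2 = ((d2 - 1) * d1 + (x2 - d1) * d2) + d1`
    obtain ⟨k, rfl⟩ := Nat.exists_eq_add_of_le hx2
    obtain ⟨e, rfl⟩ := Nat.exists_eq_add_of_lt hd2
    exact hnot ⟨e * d1 + k * (e + 1), ⟨e, k, by ring⟩, by ring⟩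
  · obtain ⟨k, rfl⟩ := Nat.exists_eq_add_of_lt hx1
    exact absurd ⟨k * d1 + x2 * d2, ⟨k, x2, rfl⟩, by ring⟩ hnot

theorem aperySet_twoGenSemigroup (hcop : Nat.Coprime d1 d2) (hd2 : 0 < d2) :
    aperySet (twoGenSemigroup d1 d2) d1 =
      ↑((Finset.range d1).image (· * d2)) := by
  ext n
  simp only [Finset.coe_image, Finset.coe_range, Set.mem_image, Set.mem_Iio]
  constructor
  · intro hn
    obtain ⟨i, hi, rfl⟩ := exists_eq_mul_of_mem_aperySet_twoGenSemigroup hd2 hn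
    exact ⟨i, hi, rfl⟩
  · rintro ⟨i, hi, rfl⟩
    exact mul_mem_aperySet_twoGenSemigroup hcop hi

theorem indicatorSeries_twoGenSemigroup_mul (R : Type*) [Ring R] (hcop : Nat.Coprime d1 d2)
    (hd2 : 0 < d2) :
    indicatorSeries R (twoGenSemigroup d1 d2) * ((1 - X ^ d1) * (1 - X ^ d2)) =
      1 - X ^ (d1 * d2) := by
  have hApery : indicatorSeries R (twoGenSemigroup d1 d2) * (1 - X ^ d1) =
      ∑ i ∈ Finset.range d1, (X ^ d2) ^ i := by
    rw [← indicatorSeries_aperySet R image_add_left_subset_twoGenSemigroup,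
      aperySet_twoGenSemigroup hcop hd2, indicatorSeries_finset,
      Finset.sum_image fun i _ j _ h => Nat.eq_of_mul_eq_mul_right hd2 h]
    simp_rw [← pow_mul, mul_comm]
  rw [← mul_assoc, hApery, geom_sum_mul_neg, ← pow_mul, mul_comm]

end TwoGenSemigroup

open PowerSeries in
open scoped Classical in
theorem gap_generating_function_two_generators_general (d1 d2 : ℕ) (h12 : d1 < d2)
    (hcop : Nat.gcd d1 d2 = 1) :
    (PowerSeries.mk fun s => if ¬ ∃ x1 x2 : ℕ, s = x1 * d1 + x2 * d2 then (1 : ℚ) else 0) *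
        ((1 - X ^ d1) * (1 - X ^ d2)) * (1 - X) =
      (1 - X ^ d1) * (1 - X ^ d2) - (1 - X ^ (d1 * d2)) * (1 - X) := by
  have hgap : (PowerSeries.mk fun s => if ¬ ∃ x1 x2 : ℕ, s = x1 * d1 + x2 * d2 then (1 : ℚ) else 0) =
      mk 1 - indicatorSeries ℚ (twoGenSemigroup d1 d2) := by
    rw [← indicatorSeries_compl]
    ext n
    simp [Set.indicator_apply, twoGenSemigroup]
  rw [hgap]
  linear_combination (1 - X ^ d1) * (1 - X ^ d2) * mk_one_mul_one_sub_eq_one ℚ -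
    (1 - X) * indicatorSeries_twoGenSemigroup_mul ℚ hcop (Nat.zero_lt_of_lt h12)

open PowerSeries in
open scoped Classical in
theorem gap_generating_function_two_generators (d1 d2 : ℕ) (h1 : 1 < d1) (h12 : d1 < d2)
    (hcop : Nat.gcd d1 d2 = 1) :
    (PowerSeries.mk fun s => if ¬ ∃ x1 x2 : ℕ, s = x1 * d1 + x2 * d2 then (1 : ℚ) else 0) *
        ((1 - X ^ d1) * (1 - X ^ d2)) * (1 - X) =
      (1 - X ^ d1) * (1 - X ^ d2) - (1 - X ^ (d1 * d2)) * (1 - X) :=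
  gap_generating_function_two_generators_general d1 d2 h12 hcop
end

section
/- Under the same hypotheses (symmetric semigroup S(d1,d2,d3) with Hilbert series numerator (1−z^{a22 d2})(1−z^{a33 d3})), the sum of the gaps satisfies 12·g₁ = (s_d − ⟨ã,d⟩)(s_d − 2⟨ã,d⟩) + (d1d2 + d1d3 + d2d3) − d1d2d3 − 1, where s_d = d1+d2+d3 and ⟨ã,d⟩ = a22 d2 + a33 d3. -/
/-!
Let `G = ∑_{s gap} Xˢ` and `[n] = 1 + X + ⋯ + X^(n-1)`, so that `1 - Xⁿ = (1 - X)[n]`.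
Multiplying the Hilbert series identity by `1 - X` turns it into the polynomial identity
`(1 - (1 - X)G)(1 - X^d₁)(1 - X^d₂)(1 - X^d₃) = (1 - X)(1 - Xᵃ)(1 - Xᵇ)`, and cancelling
`(1 - X)³` gives `(1 - (1 - X)G)[d₁][d₂][d₃] = [a][b]`. Comparing the values and the first two
derivatives of both sides at `X = 1`, where `[n] = n`, `[n]' = n(n-1)/2` and
`[n]'' = n(n-1)(n-2)/3`, yields successively `d₁d₂d₃ = ab`, the number of gaps `G(1)`, and the
sum of the gaps `G'(1)`.
-/

open Finset

namespace Polynomial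

section CommRing

variable {R : Type*} [CommRing R]

noncomputable def geomSum (d : ℕ) : R[X] := ∑ i ∈ range d, X ^ i

theorem one_sub_X_mul_geomSum (d : ℕ) : (1 - X) * (geomSum d : R[X]) = 1 - X ^ d :=
  mul_neg_geom_sum X d

theorem geomSum_succ (d : ℕ) : (geomSum (d + 1) : R[X]) = geomSum d + X ^ d :=
  sum_range_succ _ d

@[simp]
theorem eval_one_geomSum (d : ℕ) : (geomSum d : R[X]).eval 1 = d := by
  simp [geomSum, eval_finsetSum]

theorem two_mul_eval_one_derivative_geomSum (d : ℕ) :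
    2 * (derivative (geomSum d : R[X])).eval 1 = d * (d - 1) := by
  induction d with
  | zero => simp [geomSum]
  | succ n ih =>
    simp only [geomSum_succ, derivative_add, eval_add, derivative_X_pow, eval_mul, eval_C,
      eval_pow, eval_X, one_pow, mul_one]
    push_cast
    linear_combination ih

theorem three_mul_eval_one_derivative_derivative_geomSum (d : ℕ) :
    3 * (derivative (derivative (geomSum d : R[X]))).eval 1 = d * (d - 1) * (d - 2) := by
  induction d with
  | zero => simp [geomSum]
  | succ n ih =>
    simp only [geomSum_succ, derivative_add, eval_add, derivative_X_pow, derivative_C_mul,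
      eval_mul, eval_C, eval_pow, eval_X, one_pow, mul_one]
    rcases n with _ | n
    · simp [geomSum]
    · simp only [Nat.add_sub_cancel] at ih ⊢
      push_cast at ih ⊢
      linear_combination ih

theorem eval_one_derivative_sum_X_pow (T : Finset ℕ) :
    (derivative (∑ s ∈ T, X ^ s : R[X])).eval 1 = ∑ s ∈ T, (s : R) := by
  simp [derivative_X_pow, eval_finsetSum]

section OneSubXMul

variable (G : R[X])

theorem eval_one_one_sub_X_mul : (1 - (1 - X) * G).eval 1 = 1 := by
  simp

theorem eval_one_derivative_one_sub_X_mul :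
    (derivative (1 - (1 - X) * G)).eval 1 = G.eval 1 := by
  simp

theorem eval_one_derivative_derivative_one_sub_X_mul :
    (derivative (derivative (1 - (1 - X) * G))).eval 1 = 2 * (derivative G).eval 1 := by
  simp only [derivative_sub, derivative_one, derivative_mul, derivative_X, derivative_neg,
    derivative_add, zero_sub, neg_mul, one_mul, eval_neg, eval_add, eval_sub, eval_mul, eval_one,
    eval_X, sub_self, zero_mul]
  ring

end OneSubXMul

theorem geomSum_identity_of_coe_mul_eq [IsDomain R] {Q : R[X]} {d₁ d₂ d₃ a b : ℕ}
    (h : (Q : PowerSeries R) *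
        ((1 - PowerSeries.X ^ d₁) * (1 - PowerSeries.X ^ d₂) * (1 - PowerSeries.X ^ d₃)) =
      (1 - PowerSeries.X) * ((1 - PowerSeries.X ^ a) * (1 - PowerSeries.X ^ b))) :
    Q * (geomSum d₁ * geomSum d₂ * geomSum d₃) = geomSum a * geomSum b := by
  have hX : (1 - X : R[X]) ≠ 0 := fun h => by simpa using congrArg (eval 0) h
  have hpoly : Q * ((1 - X ^ d₁) * (1 - X ^ d₂) * (1 - X ^ d₃)) =
      (1 - X) * ((1 - X ^ a) * (1 - X ^ b)) := by
    rw [← coe_inj]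
    push_cast
    exact h
  simp only [← one_sub_X_mul_geomSum] at hpoly
  exact mul_left_cancel₀ (pow_ne_zero 3 hX) (by linear_combination hpoly)

end CommRing

section Field

variable {K : Type*} [Field K] [CharZero K]

theorem eval_one_derivative_geomSum (d : ℕ) :
    (derivative (geomSum d : K[X])).eval 1 = d * (d - 1) / 2 := by
  rw [eq_div_iff two_ne_zero, mul_comm, two_mul_eval_one_derivative_geomSum]

theorem eval_one_derivative_derivative_geomSum (d : ℕ) :
    (derivative (derivative (geomSum d : K[X]))).eval 1 = d * (d - 1) * (d - 2) / 3 := by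
  rw [eq_div_iff three_ne_zero, mul_comm, three_mul_eval_one_derivative_derivative_geomSum]

variable {G : K[X]} {d₁ d₂ d₃ a b : ℕ}
  (h : (1 - (1 - X) * G) * (geomSum d₁ * geomSum d₂ * geomSum d₃) = geomSum a * geomSum b)
include h

theorem mul_eq_mul_of_geomSum_identity : d₁ * d₂ * d₃ = a * b := by
  have := congrArg (eval 1) h
  simp only [eval_mul, eval_sub, eval_one, eval_X, sub_self, zero_mul, sub_zero, one_mul,
    eval_one_geomSum] at this
  exact_mod_cast this

theorem two_mul_eval_one_of_geomSum_identity (hd : d₁ * d₂ * d₃ ≠ 0) :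
    2 * G.eval 1 = a + b - (d₁ + d₂ + d₃) + 1 := by
  have hprod : (d₁ * d₂ * d₃ : K) = a * b := by exact_mod_cast mul_eq_mul_of_geomSum_identity h
  have hQ₀ := eval_one_one_sub_X_mul G
  have hQ₁ := eval_one_derivative_one_sub_X_mul G
  -- hide the shape of the first factor from `derivative_mul`
  generalize 1 - (1 - X) * G = Q at h hQ₀ hQ₁
  have := congrArg (fun p => (derivative p).eval 1) h
  simp only [derivative_mul, eval_mul, eval_add, hQ₀, hQ₁, eval_one_geomSum,
    eval_one_derivative_geomSum] at this
  have hD : (d₁ * d₂ * d₃ : K) ≠ 0 := by exact_mod_cast hd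
  refine mul_right_cancel₀ hD ?_
  linear_combination 2 * this - ((a : K) + b - 2) * hprod

theorem twelve_mul_eval_one_derivative_of_geomSum_identity (hd : d₁ * d₂ * d₃ ≠ 0) :
    12 * (derivative G).eval 1 =
      ((d₁ + d₂ + d₃) - (a + b)) * ((d₁ + d₂ + d₃) - 2 * (a + b)) +
        (d₁ * d₂ + d₁ * d₃ + d₂ * d₃) - d₁ * d₂ * d₃ - 1 := by
  have hprod : (d₁ * d₂ * d₃ : K) = a * b := by exact_mod_cast mul_eq_mul_of_geomSum_identity h
  have hG := two_mul_eval_one_of_geomSum_identity h hd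
  have hQ₀ := eval_one_one_sub_X_mul G
  have hQ₁ := eval_one_derivative_one_sub_X_mul G
  have hQ₂ := eval_one_derivative_derivative_one_sub_X_mul G
  generalize 1 - (1 - X) * G = Q at h hQ₀ hQ₁ hQ₂
  have := congrArg (fun p => (derivative (derivative p)).eval 1) h
  simp only [derivative_mul, derivative_add, eval_mul, eval_add, hQ₀, hQ₁, hQ₂, eval_one_geomSum,
    eval_one_derivative_geomSum, eval_one_derivative_derivative_geomSum] at this
  have hD : (d₁ * d₂ * d₃ : K) ≠ 0 := by exact_mod_cast hd
  refine mul_right_cancel₀ hD ?_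
  linear_combination 6 * this - 3 * (d₁ * d₂ * d₃ : K) * ((d₁ : K) + d₂ + d₃ - 3) * hG
    - (2 * ((a : K) + b) ^ 2 - 9 * (a + b) + 11 - a * b - d₁ * d₂ * d₃) * hprod

end Field

end Polynomial

open Polynomial in
theorem PowerSeries.one_sub_X_mul_mk_ite_mem {R : Type*} [CommRing R] (T : Finset ℕ) :
    (1 - PowerSeries.X : PowerSeries R) * PowerSeries.mk (fun s => if s ∈ T then 0 else 1) =
      ((1 - (1 - Polynomial.X) * ∑ s ∈ T, Polynomial.X ^ s : R[X]) : PowerSeries R) := by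
  have hmk : PowerSeries.mk (fun s => if s ∈ T then (0 : R) else 1) =
      PowerSeries.mk 1 - ((∑ s ∈ T, Polynomial.X ^ s : R[X]) : PowerSeries R) := by
    ext n
    simp only [PowerSeries.coeff_mk, map_sub, Polynomial.coeff_coe, finsetSum_coeff, Pi.one_apply]
    by_cases hn : n ∈ T <;> simp [hn]
  rw [hmk, mul_sub, mul_comm, PowerSeries.mk_one_mul_one_sub_eq_one]
  push_cast
  rfl

open PowerSeries in
open scoped Classical in
theorem symmetric_semigroup_gap_sum_general (d1 d2 d3 a22 a33 : ℕ)
    (h1 : 1 < d1) (h12 : d1 < d2) (h23 : d2 < d3)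
    (hfin : {s : ℕ | ¬ ∃ x1 x2 x3 : ℕ, s = x1 * d1 + x2 * d2 + x3 * d3}.Finite)
    (hH : (PowerSeries.mk fun s =>
          if ∃ x1 x2 x3 : ℕ, s = x1 * d1 + x2 * d2 + x3 * d3 then (1 : ℚ) else 0) *
        ((1 - X ^ d1) * (1 - X ^ d2) * (1 - X ^ d3)) =
      (1 - X ^ (a22 * d2)) * (1 - X ^ (a33 * d3))) :
    (12 : ℤ) * ∑ s ∈ hfin.toFinset, (s : ℤ) =
      (((d1 : ℤ) + d2 + d3) - ((a22 : ℤ) * d2 + (a33 : ℤ) * d3)) *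
          (((d1 : ℤ) + d2 + d3) - 2 * ((a22 : ℤ) * d2 + (a33 : ℤ) * d3)) +
        ((d1 : ℤ) * d2 + (d1 : ℤ) * d3 + (d2 : ℤ) * d3) - (d1 : ℤ) * d2 * d3 - 1 := by
  have hS : (PowerSeries.mk fun s =>
      if ∃ x1 x2 x3 : ℕ, s = x1 * d1 + x2 * d2 + x3 * d3 then (1 : ℚ) else 0) =
      PowerSeries.mk fun s => if s ∈ hfin.toFinset then 0 else 1 := by
    ext s
    by_cases hs : ∃ x1 x2 x3 : ℕ, s = x1 * d1 + x2 * d2 + x3 * d3 <;> simp [hs]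
  have hnum := congrArg ((1 - X) * ·) hH
  rw [hS, ← mul_assoc, one_sub_X_mul_mk_ite_mem] at hnum
  have hgap := Polynomial.twelve_mul_eval_one_derivative_of_geomSum_identity
    (Polynomial.geomSum_identity_of_coe_mul_eq hnum) (by simp only [ne_eq, mul_eq_zero]; omega)
  rw [Polynomial.eval_one_derivative_sum_X_pow] at hgap
  push_cast at hgap
  refine Int.cast_injective (α := ℚ) ?_
  push_cast
  linear_combination hgap

open PowerSeries in
open scoped Classical in
theorem symmetric_semigroup_gap_sum (d1 d2 d3 a11 a22 a33 : ℕ)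
    (h1 : 1 < d1) (h12 : d1 < d2) (h23 : d2 < d3)
    (hgcd : Nat.gcd d1 (Nat.gcd d2 d3) = 1)
    (ha : a11 * d1 = a22 * d2)
    (hfin : {s : ℕ | ¬ ∃ x1 x2 x3 : ℕ, s = x1 * d1 + x2 * d2 + x3 * d3}.Finite)
    (hH : (PowerSeries.mk fun s =>
          if ∃ x1 x2 x3 : ℕ, s = x1 * d1 + x2 * d2 + x3 * d3 then (1 : ℚ) else 0) *
        ((1 - X ^ d1) * (1 - X ^ d2) * (1 - X ^ d3)) =
      (1 - X ^ (a22 * d2)) * (1 - X ^ (a33 * d3))) :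
    (12 : ℤ) * ∑ s ∈ hfin.toFinset, (s : ℤ) =
      (((d1 : ℤ) + d2 + d3) - ((a22 : ℤ) * d2 + (a33 : ℤ) * d3)) *
          (((d1 : ℤ) + d2 + d3) - 2 * ((a22 : ℤ) * d2 + (a33 : ℤ) * d3)) +
        ((d1 : ℤ) * d2 + (d1 : ℤ) * d3 + (d2 : ℤ) * d3) - (d1 : ℤ) * d2 * d3 - 1 :=
  symmetric_semigroup_gap_sum_general d1 d2 d3 a22 a33 h1 h12 h23 hfin hH
end

section
/- Under the same hypotheses (symmetric semigroup S(d1,d2,d3) with Hilbert series numerator (1−z^{a22 d2})(1−z^{a33 d3})), the sum of squares of the gaps satisfies 12·g₂ = (s_d − ⟨ã,d⟩)·(s_d·⟨ã,d⟩ − ⟨ã,d⟩² − (d1d2 + d1d3 + d2d3) + d1d2d3), where s_d = d1+d2+d3 and ⟨ã,d⟩ = a22 d2 + a33 d3. -/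
/-!
Let `G = ∑_{s ∉ S} X ^ s` be the gap polynomial, so that the Hilbert series is `1 / (1 - X) - G`.
Writing `1 - X ^ n = (1 - X) [n]` with `[n] = 1 + X + ⋯ + X ^ (n - 1)`, multiplying the numerator
identity by `1 - X` and cancelling `(1 - X) ^ 3` leaves the polynomial identity
`(1 - (1 - X) G) [d1] [d2] [d3] = [a] [b]`, where `a = a22 d2` and `b = a33 d3`.
The substitution `X ↦ X + 1` turns `[n]` into `∑ₖ C(n, k + 1) Xᵏ` and `1 - (1 - X) G` into
`1 + X ∑ₖ (∑_{s ∉ S} C(s, k)) Xᵏ`. The coefficients of `X ^ 0, …, X ^ 3` then give in turn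
`d1 d2 d3 = a b`, the number of gaps, `∑ s` and `∑ C(s, 2)`, hence `∑ s ^ 2`.
-/

section

open Polynomial Finset

theorem Nat.cast_choose_three {K : Type*} [DivisionRing K] [CharZero K] (n : ℕ) :
    (n.choose 3 : K) = n * (n - 1) * (n - 2) / 6 := by
  simp [Nat.cast_choose_eq_descPochhammer_div, descPochhammer_succ_eval, Nat.factorial]

theorem Nat.cast_choose_four {K : Type*} [DivisionRing K] [CharZero K] (n : ℕ) :
    (n.choose 4 : K) = n * (n - 1) * (n - 2) * (n - 3) / 24 := by
  simp [Nat.cast_choose_eq_descPochhammer_div, descPochhammer_succ_eval, Nat.factorial]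

noncomputable def geomSumPoly (R : Type*) [Semiring R] (n : ℕ) : R[X] := ∑ i ∈ range n, X ^ i

section CommRing

variable {R : Type*} [CommRing R]

theorem one_sub_X_mul_geomSumPoly (n : ℕ) : (1 - X) * geomSumPoly R n = 1 - X ^ n :=
  mul_neg_geom_sum X n

theorem taylor_one_geomSumPoly_mul_X (n : ℕ) :
    taylor 1 (geomSumPoly R n) * X = (X + 1) ^ n - 1 := by
  have h := geom_sum_mul (X + 1 : R[X]) n
  rw [add_sub_cancel_right] at h
  rw [← h, geomSumPoly, map_sum]
  simp only [taylor_X_pow, map_one]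

theorem coeff_taylor_one_geomSumPoly (n k : ℕ) :
    (taylor 1 (geomSumPoly R n)).coeff k = n.choose (k + 1) := by
  rw [← coeff_mul_X, taylor_one_geomSumPoly_mul_X, coeff_sub, coeff_X_add_one_pow, coeff_one,
    if_neg k.succ_ne_zero, sub_zero]

theorem coeff_taylor_one_sum_X_pow (F : Finset ℕ) (k : ℕ) :
    (taylor 1 (∑ s ∈ F, X ^ s : R[X])).coeff k = ∑ s ∈ F, (s.choose k : R) := by
  simp [coeff_X_add_one_pow]

theorem PowerSeries.one_sub_X_mul_mk_ite (p : ℕ → Prop) [DecidablePred p] (F : Finset ℕ)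
    (hF : ∀ s, s ∈ F ↔ ¬ p s) :
    (1 - PowerSeries.X) * PowerSeries.mk (fun s => if p s then (1 : R) else 0) =
      ((1 - (1 - Polynomial.X) * ∑ s ∈ F, Polynomial.X ^ s : R[X]) : PowerSeries R) := by
  have hmk : PowerSeries.mk (fun s => if p s then (1 : R) else 0) =
      PowerSeries.mk 1 - ((∑ s ∈ F, Polynomial.X ^ s : R[X]) : PowerSeries R) := by
    ext n
    by_cases hn : p n <;> simp [hF, hn]
  rw [hmk, mul_sub, mul_comm, PowerSeries.mk_one_mul_one_sub_eq_one]
  push_cast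
  ring

theorem mul_geomSumPoly_eq_of_mul_one_sub_X_pow_eq [IsDomain R] {H : PowerSeries R} {G : R[X]}
    {d1 d2 d3 a b : ℕ} (hG : (1 - PowerSeries.X : PowerSeries R) * H = G)
    (hH : H * ((1 - PowerSeries.X ^ d1) * (1 - PowerSeries.X ^ d2) * (1 - PowerSeries.X ^ d3)) =
      (1 - PowerSeries.X ^ a) * (1 - PowerSeries.X ^ b)) :
    G * (geomSumPoly R d1 * geomSumPoly R d2 * geomSumPoly R d3) =
      geomSumPoly R a * geomSumPoly R b := by
  have hX : (1 - X : R[X]) ^ 2 ≠ 0 := pow_ne_zero 2 fun h => by simpa using congrArg (coeff · 0) h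
  have one_sub_X_pow (n : ℕ) : (1 - PowerSeries.X ^ n : PowerSeries R) =
      (1 - PowerSeries.X) * (geomSumPoly R n : PowerSeries R) := by
    simpa using congrArg (fun p : R[X] => (p : PowerSeries R)) (one_sub_X_mul_geomSumPoly n).symm
  refine mul_left_cancel₀ hX (Polynomial.coe_inj.mp ?_)
  simp only [one_sub_X_pow] at hH
  push_cast
  rw [← hG]
  linear_combination hH

theorem taylor_one_of_geomSumPoly_identity {F : Finset ℕ} {d1 d2 d3 a b : ℕ}
    (h : (1 - (1 - X) * ∑ s ∈ F, X ^ s) *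
        (geomSumPoly R d1 * geomSumPoly R d2 * geomSumPoly R d3) =
      geomSumPoly R a * geomSumPoly R b) :
    (1 + X * taylor 1 (∑ s ∈ F, X ^ s)) * (taylor 1 (geomSumPoly R d1) *
        taylor 1 (geomSumPoly R d2) * taylor 1 (geomSumPoly R d3)) =
      taylor 1 (geomSumPoly R a) * taylor 1 (geomSumPoly R b) := by
  have := congrArg (taylor 1) h
  simp only [taylor_mul, map_sub, taylor_one, taylor_X, map_one] at this
  linear_combination this

end CommRing

theorem sum_sq_eq_coeff_taylor_one {K : Type*} [Field K] [CharZero K] (F : Finset ℕ) :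
    ∑ s ∈ F, (s : K) ^ 2 =
      2 * (taylor 1 (∑ s ∈ F, X ^ s)).coeff 2 + (taylor 1 (∑ s ∈ F, X ^ s)).coeff 1 := by
  simp only [coeff_taylor_one_sum_X_pow, Nat.cast_choose_two, Nat.choose_one_right, mul_sum,
    ← sum_add_distrib]
  exact sum_congr rfl fun s _ => by ring

theorem twelve_mul_sum_sq_eq_of_geomSumPoly_identity {F : Finset ℕ} {d1 d2 d3 a b : ℕ}
    (hd : d1 * d2 * d3 ≠ 0)
    (h : (1 - (1 - X) * ∑ s ∈ F, X ^ s) *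
        (geomSumPoly ℚ d1 * geomSumPoly ℚ d2 * geomSumPoly ℚ d3) =
      geomSumPoly ℚ a * geomSumPoly ℚ b) :
    12 * ∑ s ∈ F, (s : ℚ) ^ 2 =
      ((d1 + d2 + d3 : ℚ) - (a + b)) * ((d1 + d2 + d3) * (a + b) - (a + b) ^ 2
        - (d1 * d2 + d1 * d3 + d2 * d3) + d1 * d2 * d3) := by
  have hπ : (d1 * d2 * d3 : ℚ) ≠ 0 := by exact_mod_cast hd
  have h' := taylor_one_of_geomSumPoly_identity h
  rw [sum_sq_eq_coeff_taylor_one]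
  generalize taylor (1 : ℚ) (∑ s ∈ F, X ^ s) = T at h' ⊢
  have c0 := congrArg (coeff · 0) h'
  have c1 := congrArg (coeff · 1) h'
  have c2 := congrArg (coeff · 2) h'
  have c3 := congrArg (coeff · 3) h'
  simp only [coeff_mul, Nat.sum_antidiagonal_eq_sum_range_succ_mk, sum_range_succ, sum_range_zero,
    coeff_add, coeff_one, coeff_X, coeff_taylor_one_geomSumPoly, Nat.reduceAdd, Nat.reduceSub,
    Nat.reduceEqDiff, reduceIte, Nat.choose_one_right, Nat.cast_choose_two, Nat.cast_choose_three,
    Nat.cast_choose_four] at c0 c1 c2 c3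
  -- `c0 : d1 d2 d3 = a b`; its multiples below trade `a b` for `d1 d2 d3`.
  have genus : T.coeff 0 = (a + b - (d1 + d2 + d3) + 1) / 2 := by
    apply mul_left_cancel₀ hπ
    linear_combination c1 + (1 - (a + b) / 2) * c0
  rw [genus] at c2 c3
  have first_moment : T.coeff 1 =
      (a ^ 2 + b ^ 2 - (d1 ^ 2 + d2 ^ 2 + d3 ^ 2) + 3 * (a + b - (d1 + d2 + d3)) ^ 2 - 2) / 24 := by
    apply mul_left_cancel₀ hπ
    linear_combination c2 + (-11 / 12 + 3 / 4 * (a + b) - (a ^ 2 + b ^ 2) / 6 - a * b / 4) * c0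
  rw [first_moment] at c3 ⊢
  apply mul_left_cancel₀ hπ
  linear_combination 24 * c3 + (20 - 21 * (a + b) + 8 * (a + b) ^ 2 - (a + b) ^ 3
    + a * b * (a + b - 4) + d1 * d2 * d3 * (a + b - (d1 + d2 + d3))) * c0

end

open PowerSeries in
open scoped Classical in
theorem symmetric_semigroup_gap_square_sum_general (d1 d2 d3 a22 a33 : ℕ)
    (h1 : 1 < d1) (h12 : d1 < d2) (h23 : d2 < d3)
    (hfin : {s : ℕ | ¬ ∃ x1 x2 x3 : ℕ, s = x1 * d1 + x2 * d2 + x3 * d3}.Finite)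
    (hH : (PowerSeries.mk fun s =>
          if ∃ x1 x2 x3 : ℕ, s = x1 * d1 + x2 * d2 + x3 * d3 then (1 : ℚ) else 0) *
        ((1 - X ^ d1) * (1 - X ^ d2) * (1 - X ^ d3)) =
      (1 - X ^ (a22 * d2)) * (1 - X ^ (a33 * d3))) :
    (12 : ℤ) * ∑ s ∈ hfin.toFinset, (s : ℤ) ^ 2 =
      (((d1 : ℤ) + d2 + d3) - ((a22 : ℤ) * d2 + (a33 : ℤ) * d3)) *
        (((d1 : ℤ) + d2 + d3) * ((a22 : ℤ) * d2 + (a33 : ℤ) * d3) -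
            ((a22 : ℤ) * d2 + (a33 : ℤ) * d3) ^ 2 -
          ((d1 : ℤ) * d2 + (d1 : ℤ) * d3 + (d2 : ℤ) * d3) + (d1 : ℤ) * d2 * d3) := by
  have hpoly := mul_geomSumPoly_eq_of_mul_one_sub_X_pow_eq
    (PowerSeries.one_sub_X_mul_mk_ite _ hfin.toFinset fun _ => hfin.mem_toFinset) hH
  have hd : d1 * d2 * d3 ≠ 0 := by simp only [ne_eq, mul_eq_zero, not_or]; omega
  exact_mod_cast twelve_mul_sum_sq_eq_of_geomSumPoly_identity hd hpoly

open PowerSeries in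
open scoped Classical in
theorem symmetric_semigroup_gap_square_sum (d1 d2 d3 a11 a22 a33 : ℕ)
    (h1 : 1 < d1) (h12 : d1 < d2) (h23 : d2 < d3)
    (hgcd : Nat.gcd d1 (Nat.gcd d2 d3) = 1)
    (ha : a11 * d1 = a22 * d2)
    (hfin : {s : ℕ | ¬ ∃ x1 x2 x3 : ℕ, s = x1 * d1 + x2 * d2 + x3 * d3}.Finite)
    (hH : (PowerSeries.mk fun s =>
          if ∃ x1 x2 x3 : ℕ, s = x1 * d1 + x2 * d2 + x3 * d3 then (1 : ℚ) else 0) *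
        ((1 - X ^ d1) * (1 - X ^ d2) * (1 - X ^ d3)) =
      (1 - X ^ (a22 * d2)) * (1 - X ^ (a33 * d3))) :
    (12 : ℤ) * ∑ s ∈ hfin.toFinset, (s : ℤ) ^ 2 =
      (((d1 : ℤ) + d2 + d3) - ((a22 : ℤ) * d2 + (a33 : ℤ) * d3)) *
        (((d1 : ℤ) + d2 + d3) * ((a22 : ℤ) * d2 + (a33 : ℤ) * d3) -
            ((a22 : ℤ) * d2 + (a33 : ℤ) * d3) ^ 2 -
          ((d1 : ℤ) * d2 + (d1 : ℤ) * d3 + (d2 : ℤ) * d3) + (d1 : ℤ) * d2 * d3) :=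
  symmetric_semigroup_gap_square_sum_general d1 d2 d3 a22 a33 h1 h12 h23 hfin hH
end

section
/- Let d1, d2, d3 with gcd 1 generate a non-symmetric numerical semigroup whose Hilbert series numerator is Q(z) = 1 − Σ_i z^{a_{ii} d_i} + z^{(⟨a,d⟩ − J)/2} + z^{(⟨a,d⟩ + J)/2}, where ⟨a,d⟩ = Σ a_{ii} d_i and J² = ⟨a,d⟩² − 4Σ_{i>j} a_{ii}a_{jj}d_i d_j + 4 d1 d2 d3. Then the number of gaps satisfies 2·g₀ = 1 − (d1+d2+d3) − a11 a22 a33 + ⟨a,d⟩. -/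
/-!
Let `G` be the gap polynomial and `W = (1 - z^d₁)(1 - z^d₂)(1 - z^d₃)`. Since `H + G = 1/(1 - z)`,
the Hilbert series identity `H W = Q` becomes the polynomial identity
`Q (1 - z) + G (1 - z) W = W`. The factor `(1 - z) W` vanishes to order 4 at `z = 1` with leading
Taylor coefficient `d₁ d₂ d₃`, so comparing fourth Taylor coefficients at `1` (those of `zⁿ` being
`n.choose k`) gives `[Q]₃ = g₀ d₁ d₂ d₃ + d₁ d₂ d₃ (d₁ + d₂ + d₃ - 3) / 2`. In `[Q]₃` the exponents
`(⟨a,d⟩ ∓ J)/2` enter symmetrically, so only `J²` survives, and eliminating it with the formula for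
`J²` leaves the genus.
-/

namespace Nat

variable (K : Type*) [DivisionRing K] [CharZero K]

theorem cast_choose_three_s14 (a : ℕ) : (a.choose 3 : K) = a * (a - 1) * (a - 2) / 6 := by
  simp [cast_choose_eq_descPochhammer_div, descPochhammer_succ_eval, factorial]

theorem cast_choose_four_s14 (a : ℕ) :
    (a.choose 4 : K) = a * (a - 1) * (a - 2) * (a - 3) / 24 := by
  simp [cast_choose_eq_descPochhammer_div, descPochhammer_succ_eval, factorial]

end Nat

namespace PowerSeries

theorem mk_ite_add_sum_X_pow_of_finite {R : Type*} [Semiring R] (P : ℕ → Prop) [DecidablePred P]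
    (hfin : {s | ¬ P s}.Finite) :
    mk (fun s => if P s then (1 : R) else 0) +
      ((∑ s ∈ hfin.toFinset, Polynomial.X ^ s : Polynomial R) : R⟦X⟧) = mk 1 := by
  ext n
  by_cases hn : P n <;> simp [hn]

end PowerSeries

namespace Polynomial

variable {R : Type*} [CommRing R]

theorem mul_one_sub_X_add_mul_eq_of_mul_eq {H : PowerSeries R} {G W Q : R[X]}
    (hQ : H * W = Q) (hG : H + (G : PowerSeries R) = PowerSeries.mk 1) :
    Q * (1 - X) + G * ((1 - X) * W) = W := by
  rw [← coe_inj]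
  push_cast
  rw [← hQ]
  linear_combination (1 - PowerSeries.X) * (W : PowerSeries R) * hG +
    (W : PowerSeries R) * PowerSeries.mk_one_mul_one_sub_eq_one R

theorem taylor_coeff_X_sub_C_pow_mul (r : R) (k n : ℕ) (g : R[X]) :
    (taylor r ((X - C r) ^ k * g)).coeff (n + k) = (taylor r g).coeff n := by
  simp [taylor_mul, taylor_pow, coeff_X_pow_mul]

theorem taylor_one_coeff_X_pow (n k : ℕ) : (taylor 1 (X ^ n : R[X])).coeff k = n.choose k := by
  rw [taylor_X_pow, C_1, coeff_X_add_one_pow]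

theorem one_sub_X_pow_eq_X_sub_C_mul (d : ℕ) :
    (1 - X ^ d : R[X]) = (X - C 1) * -∑ i ∈ Finset.range d, X ^ i := by
  rw [C_1, mul_neg, mul_comm, geom_sum_mul]
  ring

theorem one_sub_X_mul_prod_one_sub_X_pow (a b c : ℕ) :
    (1 - X) * ((1 - X ^ a) * (1 - X ^ b) * (1 - X ^ c) : R[X]) =
      (X - C 1) ^ 4 * ((∑ i ∈ Finset.range a, X ^ i) * (∑ i ∈ Finset.range b, X ^ i) *
        (∑ i ∈ Finset.range c, X ^ i)) := by
  rw [one_sub_X_pow_eq_X_sub_C_mul a, one_sub_X_pow_eq_X_sub_C_mul b,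
    one_sub_X_pow_eq_X_sub_C_mul c, C_1]
  ring

theorem taylor_one_coeff_four_of_gap_identity {G Q : R[X]} (a b c : ℕ)
    (h : Q * (1 - X) + G * ((1 - X) * ((1 - X ^ a) * (1 - X ^ b) * (1 - X ^ c))) =
      (1 - X ^ a) * (1 - X ^ b) * (1 - X ^ c)) :
    -(taylor 1 Q).coeff 3 + G.eval 1 * (a * b * c) =
      (taylor 1 ((1 - X ^ a) * (1 - X ^ b) * (1 - X ^ c) : R[X])).coeff 4 := by
  have hQ := taylor_coeff_X_sub_C_pow_mul (1 : R) 1 3 (-Q)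
  have hG := taylor_coeff_X_sub_C_pow_mul (1 : R) 4 0
    (G * ((∑ i ∈ Finset.range a, X ^ i) * (∑ i ∈ Finset.range b, X ^ i) *
      (∑ i ∈ Finset.range c, X ^ i)))
  norm_num only at hQ hG
  rw [← h, one_sub_X_mul_prod_one_sub_X_pow, mul_left_comm G, map_add, coeff_add,
    show Q * (1 - X) = (X - C 1) ^ 1 * -Q by rw [C_1]; ring, hQ, hG, taylor_coeff_zero]
  simp

theorem taylor_one_coeff_four_prod_one_sub_X_pow (a b c : ℕ) :
    (taylor 1 ((1 - X ^ a) * (1 - X ^ b) * (1 - X ^ c) : ℚ[X])).coeff 4 =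
      -(a * b * c) * (a + b + c - 3) / 2 := by
  have : ((1 - X ^ a) * (1 - X ^ b) * (1 - X ^ c) : ℚ[X]) =
      X ^ 0 - X ^ a - X ^ b - X ^ c + X ^ (a + b) + X ^ (a + c) + X ^ (b + c) -
        X ^ (a + b + c) := by
    ring
  simp only [this, map_add, map_sub, coeff_add, coeff_sub, taylor_one_coeff_X_pow,
    Nat.cast_choose_four_s14]
  push_cast
  ring

theorem taylor_one_coeff_three_eq_of_hilbertSeries {P : ℕ → Prop} [DecidablePred P]
    (hfin : {s | ¬ P s}.Finite) {Q : ℚ[X]} (a b c : ℕ)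
    (hH : PowerSeries.mk (fun s => if P s then (1 : ℚ) else 0) *
      (((1 - X ^ a) * (1 - X ^ b) * (1 - X ^ c) : ℚ[X]) : PowerSeries ℚ) = Q) :
    (taylor 1 Q).coeff 3 =
      hfin.toFinset.card * (a * b * c) + a * b * c * (a + b + c - 3) / 2 := by
  have key := taylor_one_coeff_four_of_gap_identity a b c
    (mul_one_sub_X_add_mul_eq_of_mul_eq hH (PowerSeries.mk_ite_add_sum_X_pow_of_finite P hfin))
  rw [taylor_one_coeff_four_prod_one_sub_X_pow] at key
  simp only [eval_finsetSum, eval_pow, eval_X, one_pow, Finset.sum_const, nsmul_eq_mul,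
    mul_one] at key
  linear_combination -key

end Polynomial

open PowerSeries in
open scoped Classical in
theorem nonsymmetric_semigroup_genus_general (d1 d2 d3 a11 a22 a33 J e1 e2 : ℕ)
    (h1 : 1 < d1) (h12 : d1 < d2) (h23 : d2 < d3)
    (hJ : (J : ℤ) ^ 2 =
      ((a11 : ℤ) * d1 + (a22 : ℤ) * d2 + (a33 : ℤ) * d3) ^ 2 -
        4 * ((a11 : ℤ) * a22 * d1 * d2 + (a11 : ℤ) * a33 * d1 * d3 +
          (a22 : ℤ) * a33 * d2 * d3) + 4 * (d1 : ℤ) * d2 * d3)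
    (he1 : 2 * e1 + J = a11 * d1 + a22 * d2 + a33 * d3)
    (he2 : 2 * e2 = a11 * d1 + a22 * d2 + a33 * d3 + J)
    (hfin : {s : ℕ | ¬ ∃ x1 x2 x3 : ℕ, s = x1 * d1 + x2 * d2 + x3 * d3}.Finite)
    (hH : (PowerSeries.mk fun s =>
          if ∃ x1 x2 x3 : ℕ, s = x1 * d1 + x2 * d2 + x3 * d3 then (1 : ℚ) else 0) *
        ((1 - X ^ d1) * (1 - X ^ d2) * (1 - X ^ d3)) =
      1 - X ^ (a11 * d1) - X ^ (a22 * d2) - X ^ (a33 * d3) + X ^ e1 + X ^ e2) :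
    (2 : ℤ) * hfin.toFinset.card =
      1 - ((d1 : ℤ) + d2 + d3) - (a11 : ℤ) * a22 * a33 +
        ((a11 : ℤ) * d1 + (a22 : ℤ) * d2 + (a33 : ℤ) * d3) := by
  have key := Polynomial.taylor_one_coeff_three_eq_of_hilbertSeries hfin d1 d2 d3
    (Q := 1 - Polynomial.X ^ (a11 * d1) - Polynomial.X ^ (a22 * d2) -
      Polynomial.X ^ (a33 * d3) + Polynomial.X ^ e1 + Polynomial.X ^ e2)
    (by push_cast; exact hH)
  -- `qify` would otherwise rewrite the set inside `hfin` and detach the two occurrences of `g₀`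
  generalize hfin.toFinset.card = g at key ⊢
  simp only [map_add, map_sub, Polynomial.taylor_one, Polynomial.coeff_add, Polynomial.coeff_sub,
    Polynomial.coeff_C_of_ne_zero three_ne_zero, Polynomial.taylor_one_coeff_X_pow,
    Nat.cast_choose_three_s14] at key
  push_cast at key
  qify at hJ he1 he2
  rw [show (e1 : ℚ) = (a11 * d1 + a22 * d2 + a33 * d3 - J) / 2 by linarith,
    show (e2 : ℚ) = (a11 * d1 + a22 * d2 + a33 * d3 + J) / 2 by linarith] at key
  have hD : (d1 : ℚ) * d2 * d3 ≠ 0 := by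
    have : d1 ≠ 0 ∧ d2 ≠ 0 ∧ d3 ≠ 0 := by omega
    simp [this]
  qify
  refine mul_right_cancel₀ hD ?_
  linear_combination (-2) * key + ((a11 * d1 + a22 * d2 + a33 * d3 - 2 : ℚ) / 4) * hJ

open PowerSeries in
open scoped Classical in
theorem nonsymmetric_semigroup_genus (d1 d2 d3 a11 a22 a33 J e1 e2 : ℕ)
    (h1 : 1 < d1) (h12 : d1 < d2) (h23 : d2 < d3)
    (hgcd : Nat.gcd d1 (Nat.gcd d2 d3) = 1)
    (hJ : (J : ℤ) ^ 2 =
      ((a11 : ℤ) * d1 + (a22 : ℤ) * d2 + (a33 : ℤ) * d3) ^ 2 -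
        4 * ((a11 : ℤ) * a22 * d1 * d2 + (a11 : ℤ) * a33 * d1 * d3 +
          (a22 : ℤ) * a33 * d2 * d3) + 4 * (d1 : ℤ) * d2 * d3)
    (he1 : 2 * e1 + J = a11 * d1 + a22 * d2 + a33 * d3)
    (he2 : 2 * e2 = a11 * d1 + a22 * d2 + a33 * d3 + J)
    (hfin : {s : ℕ | ¬ ∃ x1 x2 x3 : ℕ, s = x1 * d1 + x2 * d2 + x3 * d3}.Finite)
    (hH : (PowerSeries.mk fun s =>
          if ∃ x1 x2 x3 : ℕ, s = x1 * d1 + x2 * d2 + x3 * d3 then (1 : ℚ) else 0) *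
        ((1 - X ^ d1) * (1 - X ^ d2) * (1 - X ^ d3)) =
      1 - X ^ (a11 * d1) - X ^ (a22 * d2) - X ^ (a33 * d3) + X ^ e1 + X ^ e2) :
    (2 : ℤ) * hfin.toFinset.card =
      1 - ((d1 : ℤ) + d2 + d3) - (a11 : ℤ) * a22 * a33 +
        ((a11 : ℤ) * d1 + (a22 : ℤ) * d2 + (a33 : ℤ) * d3) :=
  nonsymmetric_semigroup_genus_general d1 d2 d3 a11 a22 a33 J e1 e2 h1 h12 h23 hJ he1 he2 hfin hH
end

section
/- Let S(d1,d2,d3) be a numerical semigroup (gcd(d1,d2,d3)=1) whose Hilbert series is H(z) = Q(z)/((1−z^{d1})(1−z^{d2})(1−z^{d3})) where Q(z) = Σ_α c_α z^{e_α} is a finite sum with integer coefficients. Then for every n ≥ 0, the n-th power sum of the gaps is g_n = −B_{n+1}/(n+1) + (n!/((n+3)!·d1 d2 d3))·Σ_α c_α·B_{n+3}^{(3)}(e_α | d1,d2,d3). -/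
/-!
Write the Hilbert series as `H(z) = 1/(1 - z) - G(z)` with `G(z) = ∑_{gaps} zˢ`. Multiplying the
hypothesis by `1 - z` gives the polynomial identity `P = (1 - z) Q + (1 - z) G P`, where
`P = ∏ (1 - z^{dᵢ})` and `Q = ∑ c_α z^{e_α}`; being polynomial, it survives the substitution
`z = eᵗ`, which is meaningless for `H` itself. Multiplying by `t / (eᵗ - 1)` yields
`t Q(eᵗ) = ∏ (e^{dᵢ t} - 1) · (B(t) + t G(eᵗ))` with `B` the Bernoulli series, while the generating
function of `B⁽³⁾` gives `d₁d₂d₃ t³ Q(eᵗ) = ∏ (e^{dᵢ t} - 1) · ∑ c_α B⁽³⁾(e_α; t)`. Cancelling the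
nonzero product and reading off the coefficient of `t^{n+3}` gives the formula, the power sums
`gₙ` entering through `G(eᵗ) = ∑ₙ gₙ tⁿ / n!`.
-/

open PowerSeries

@[simp, norm_cast]
theorem Polynomial.coe_sum {R ι : Type*} [CommSemiring R] (s : Finset ι) (f : ι → Polynomial R) :
    ((∑ i ∈ s, f i : Polynomial R) : R⟦X⟧) = ∑ i ∈ s, (f i : R⟦X⟧) :=
  map_sum Polynomial.coeToPowerSeries.ringHom f s

theorem PowerSeries.mk_indicator_eq_mk_one_sub_sum_X_pow {R : Type*} [Ring R] {p : ℕ → Prop}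
    [DecidablePred p] (hfin : {s | ¬ p s}.Finite) :
    (mk fun s => if p s then (1 : R) else 0) = mk 1 - ∑ s ∈ hfin.toFinset, X ^ s := by
  ext k
  by_cases hk : p k <;> simp [coeff_X_pow, hk]

theorem Polynomial.eq_one_sub_X_mul_add_of_mk_indicator_mul_eq {R : Type*} [CommRing R]
    {p : ℕ → Prop} [DecidablePred p] (hfin : {s | ¬ p s}.Finite) {P Q : Polynomial R}
    (h : (mk fun s => if p s then (1 : R) else 0) * (P : R⟦X⟧) = Q) :
    P = (1 - X) * Q + (1 - X) * (∑ s ∈ hfin.toFinset, X ^ s) * P := by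
  apply Polynomial.coe_injective
  push_cast
  rw [← h, mk_indicator_eq_mk_one_sub_sum_X_pow hfin]
  linear_combination (-(P : R⟦X⟧)) * mk_one_mul_one_sub_eq_one (S := R)

theorem PowerSeries.X_mul_aeval_exp_eq {A : Type*} [CommRing A] [Algebra ℚ A]
    {P Q G : Polynomial A}
    (h : P = (1 - Polynomial.X) * Q + (1 - Polynomial.X) * G * P) :
    X * Polynomial.aeval (exp A) Q =
      -Polynomial.aeval (exp A) P * (bernoulliPowerSeries A + X * Polynomial.aeval (exp A) G) := by
  have he := congrArg (Polynomial.aeval (exp A)) h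
  simp only [map_add, map_mul, map_sub, map_one, Polynomial.aeval_X] at he
  linear_combination (bernoulliPowerSeries A) * he -
    (Polynomial.aeval (exp A) Q + Polynomial.aeval (exp A) G * Polynomial.aeval (exp A) P) *
      bernoulliPowerSeries_mul_exp_sub_one A

theorem PowerSeries.rescale_exp_sub_one_ne_zero {A : Type*} [CommRing A] [Algebra ℚ A] {a : A}
    (ha : a ≠ 0) : rescale a (exp A) - 1 ≠ 0 := by
  intro h
  exact ha (by simpa [coeff_rescale, coeff_exp] using congrArg (coeff 1) h)

theorem PowerSeries.coeff_X_sq_mul_bernoulliPowerSeries_add_X_mul_sum_rescale_exp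
    (S : Finset ℕ) (n : ℕ) :
    coeff (n + 3) (X ^ 2 * (bernoulliPowerSeries ℚ + X * ∑ s ∈ S, rescale (s : ℚ) (exp ℚ))) =
      bernoulli (n + 1) / (n + 1).factorial + (∑ s ∈ S, (s : ℚ) ^ n) / n.factorial := by
  simp [coeff_X_pow_mul', bernoulliPowerSeries, coeff_rescale, coeff_exp, Finset.sum_mul,
    div_eq_mul_inv]

theorem eq_neg_bernoulli_div_add_of_div_factorial_eq {n : ℕ} {d b S T : ℚ} (hd : d ≠ 0)
    (h : T / (n + 3).factorial = d * (b / (n + 1).factorial + S / n.factorial)) :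
    S = -b / (n + 1) + n.factorial / ((n + 3).factorial * d) * T := by
  rw [Nat.factorial_succ n] at h
  push_cast at h
  field_simp at h ⊢
  linear_combination -h

open PowerSeries in
open scoped Classical in
theorem power_sum_gaps_general_numerator_general {ι : Type*} (A : Finset ι) (c : ι → ℤ) (e : ι → ℕ)
    (d1 d2 d3 : ℕ) (h1 : 1 < d1) (h12 : d1 < d2) (h23 : d2 < d3)
    (hfin : {s : ℕ | ¬ ∃ x1 x2 x3 : ℕ, s = x1 * d1 + x2 * d2 + x3 * d3}.Finite)
    (hH : (PowerSeries.mk fun s =>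
          if ∃ x1 x2 x3 : ℕ, s = x1 * d1 + x2 * d2 + x3 * d3 then (1 : ℚ) else 0) *
        ((1 - X ^ d1) * (1 - X ^ d2) * (1 - X ^ d3)) =
      ∑ α ∈ A, PowerSeries.C ((c α : ℚ)) * X ^ (e α))
    (B3 : ℕ → ℚ → ℚ)
    (hB3 : ∀ x : ℚ, ((rescale (d1 : ℚ) (exp ℚ) - 1) * (rescale (d2 : ℚ) (exp ℚ) - 1) *
          (rescale (d3 : ℚ) (exp ℚ) - 1)) *
        PowerSeries.mk (fun n => B3 n x / n.factorial) =
      PowerSeries.C ((d1 : ℚ) * (d2 : ℚ) * (d3 : ℚ)) * (X ^ 3 * rescale x (exp ℚ)))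
    (n : ℕ) :
    ∑ s ∈ hfin.toFinset, (s : ℚ) ^ n =
      -bernoulli (n + 1) / ((n : ℚ) + 1) +
        ((n.factorial : ℚ) / (((n + 3).factorial : ℚ) * ((d1 : ℚ) * (d2 : ℚ) * (d3 : ℚ)))) *
          ∑ α ∈ A, (c α : ℚ) * B3 (n + 3) ((e α : ℚ)) := by
  set d : ℚ := (d1 : ℚ) * (d2 : ℚ) * (d3 : ℚ)
  set F := (rescale (d1 : ℚ) (exp ℚ) - 1) * (rescale (d2 : ℚ) (exp ℚ) - 1) *
    (rescale (d3 : ℚ) (exp ℚ) - 1)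
  set M := ∑ α ∈ A, C (c α : ℚ) * mk fun m => B3 m (e α) / m.factorial
  set G := ∑ s ∈ hfin.toFinset, rescale (s : ℚ) (exp ℚ)
  have hd : d ≠ 0 := by
    simp only [d, ne_eq, mul_eq_zero, Nat.cast_eq_zero, not_or]
    omega
  have hF : F ≠ 0 := by
    refine mul_ne_zero (mul_ne_zero ?_ ?_) ?_ <;>
      exact rescale_exp_sub_one_ne_zero (Nat.cast_ne_zero.mpr (by omega))
  have hFM : F * M = F * (C d * X ^ 2 * (bernoulliPowerSeries ℚ + X * G)) := by
    have hPQ := Polynomial.eq_one_sub_X_mul_add_of_mk_indicator_mul_eq hfin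
      (P := (1 - .X ^ d1) * (1 - .X ^ d2) * (1 - .X ^ d3))
      (Q := ∑ α ∈ A, .C (c α : ℚ) * .X ^ e α) (by push_cast; exact hH)
    have hX := X_mul_aeval_exp_eq hPQ
    simp only [map_sum, map_mul, map_sub, map_one, map_pow, Polynomial.aeval_X, Polynomial.aeval_C,
      PowerSeries.algebraMap_apply, Algebra.algebraMap_self_apply, exp_pow_eq_rescale_exp] at hX
    have hBM : F * M = C d * X ^ 3 * ∑ α ∈ A, C (c α : ℚ) * rescale (e α : ℚ) (exp ℚ) := by
      simp only [M, Finset.mul_sum]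
      exact Finset.sum_congr rfl fun α _ => by linear_combination C (c α : ℚ) * hB3 (e α)
    linear_combination hBM + C d * X ^ 2 * hX
  have hcoeff := congrArg (coeff (n + 3)) (mul_left_cancel₀ hF hFM)
  simp only [M, G, map_sum, coeff_C_mul, coeff_mk, mul_assoc,
    coeff_X_sq_mul_bernoulliPowerSeries_add_X_mul_sum_rescale_exp] at hcoeff
  refine eq_neg_bernoulli_div_add_of_div_factorial_eq hd ?_
  simpa only [Finset.sum_div, mul_div_assoc] using hcoeff

open PowerSeries in
open scoped Classical in
theorem power_sum_gaps_general_numerator {ι : Type*} (A : Finset ι) (c : ι → ℤ) (e : ι → ℕ)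
    (d1 d2 d3 : ℕ) (h1 : 1 < d1) (h12 : d1 < d2) (h23 : d2 < d3)
    (hgcd : Nat.gcd d1 (Nat.gcd d2 d3) = 1)
    (hfin : {s : ℕ | ¬ ∃ x1 x2 x3 : ℕ, s = x1 * d1 + x2 * d2 + x3 * d3}.Finite)
    (hH : (PowerSeries.mk fun s =>
          if ∃ x1 x2 x3 : ℕ, s = x1 * d1 + x2 * d2 + x3 * d3 then (1 : ℚ) else 0) *
        ((1 - X ^ d1) * (1 - X ^ d2) * (1 - X ^ d3)) =
      ∑ α ∈ A, PowerSeries.C ((c α : ℚ)) * X ^ (e α))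
    (B3 : ℕ → ℚ → ℚ)
    (hB3 : ∀ x : ℚ, ((rescale (d1 : ℚ) (exp ℚ) - 1) * (rescale (d2 : ℚ) (exp ℚ) - 1) *
          (rescale (d3 : ℚ) (exp ℚ) - 1)) *
        PowerSeries.mk (fun n => B3 n x / n.factorial) =
      PowerSeries.C ((d1 : ℚ) * (d2 : ℚ) * (d3 : ℚ)) * (X ^ 3 * rescale x (exp ℚ)))
    (n : ℕ) :
    ∑ s ∈ hfin.toFinset, (s : ℚ) ^ n =
      -bernoulli (n + 1) / ((n : ℚ) + 1) +
        ((n.factorial : ℚ) / (((n + 3).factorial : ℚ) * ((d1 : ℚ) * (d2 : ℚ) * (d3 : ℚ)))) *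
          ∑ α ∈ A, (c α : ℚ) * B3 (n + 3) ((e α : ℚ)) :=
  power_sum_gaps_general_numerator_general A c e d1 d2 d3 h1 h12 h23 hfin hH B3 hB3 n
end

section
/- Let d1,d2,d3 generate a symmetric numerical semigroup with a13 = a23 = 0 in the minimal relation matrix, so a11 d1 = a22 d2. Then for every n ≥ 0, the n-th power sum of the gaps equals g_n = −B_{n+1}/(n+1) + (n!/((n+3)!·d1d2d3))·[B_{n+3}^{(3)}(0|d³) − B_{n+3}^{(3)}(a22 d2|d³) − B_{n+3}^{(3)}(a33 d3|d³) + B_{n+3}^{(3)}(a22 d2 + a33 d3|d³)]. -/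
/-!
Let `G(z) = ∑ z^s` over the gaps `s`. The indicator series of the semigroup plus `G` is
`1/(1-z)`, so the Hilbert series identity becomes the polynomial identity
`G(z)(1-z)∏(1-z^{dᵢ}) = ∏(1-z^{dᵢ}) - (1-z)(1-z^A)(1-z^B)` with `A = a22 d2`, `B = a33 d3`.
Substituting `z = e^t` makes `G(e^t)` the exponential generating function of the power sums
`g_n`. After dividing by `(e^t-1)∏(e^{dᵢt}-1)`, the right-hand side is expressed through
`t/(e^t-1) = ∑ B_m t^m/m!` and `t³e^{xt}/∏(e^{dᵢt}-1)`, the generating function of `B3 · x`;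
comparing coefficients of `t^{n+3}` gives the formula.
-/

open PowerSeries

namespace PowerSeries

theorem mk_indicator_add_sum_X_pow_eq_mk_one {R : Type*} [CommRing R] (p : ℕ → Prop)
    [DecidablePred p] (hfin : {s | ¬ p s}.Finite) :
    mk (fun s => if p s then (1 : R) else 0) + ∑ s ∈ hfin.toFinset, X ^ s = mk 1 := by
  ext k
  by_cases hk : p k <;> simp [coeff_X_pow, hk]

section Exp

variable {A : Type*} [CommRing A] [Algebra ℚ A]

theorem coeff_sum_rescale_exp {ι : Type*} (F : Finset ι) (f : ι → A) (n : ℕ) :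
    coeff n (∑ i ∈ F, rescale (f i) (exp A)) =
      (∑ i ∈ F, f i ^ n) * algebraMap ℚ A (1 / n.factorial) := by
  simp [coeff_rescale, coeff_exp, Finset.sum_mul]

theorem rescale_exp_sub_one_ne_zero_s19 {c : A} (hc : c ≠ 0) : rescale c (exp A) - 1 ≠ 0 :=
  fun h => hc (by simpa [coeff_rescale, coeff_exp] using congrArg (coeff 1) h)

end Exp

end PowerSeries

theorem Polynomial.sum_X_pow_mul_eq_of_mk_indicator_mul {R : Type*} [CommRing R]
    (p : ℕ → Prop) [DecidablePred p] (hfin : {s | ¬ p s}.Finite) {D N : Polynomial R}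
    (hH : mk (fun s => if p s then (1 : R) else 0) * (D : R⟦X⟧) = N) :
    (∑ s ∈ hfin.toFinset, Polynomial.X ^ s) * ((1 - Polynomial.X) * D) =
      D - (1 - Polynomial.X) * N := by
  apply Polynomial.coe_injective R
  have hone : (mk (fun s => if p s then (1 : R) else 0) +
      ∑ s ∈ hfin.toFinset, PowerSeries.X ^ s) * (1 - PowerSeries.X) = 1 := by
    rw [mk_indicator_add_sum_X_pow_eq_mk_one, mk_one_mul_one_sub_eq_one]
  simp only [← coeToPowerSeries.ringHom_apply, map_mul, map_sub, map_one, map_sum, map_pow]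
  simp only [coeToPowerSeries.ringHom_apply, coe_X]
  linear_combination (D : R⟦X⟧) * hone - (1 - PowerSeries.X) * hH

theorem C_mul_X_pow_three_mul_sum_rescale_exp {K : Type*} [Field K] [CharZero K]
    {d1 d2 d3 A B : ℕ} (hd1 : d1 ≠ 0) (hd2 : d2 ≠ 0) (hd3 : d3 ≠ 0) {F : Finset ℕ}
    (hgap : (∑ s ∈ F, Polynomial.X ^ s : Polynomial K) *
        ((1 - Polynomial.X) * ((1 - Polynomial.X ^ d1) * (1 - Polynomial.X ^ d2) *
          (1 - Polynomial.X ^ d3))) =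
      (1 - Polynomial.X ^ d1) * (1 - Polynomial.X ^ d2) * (1 - Polynomial.X ^ d3) -
        (1 - Polynomial.X) * ((1 - Polynomial.X ^ A) * (1 - Polynomial.X ^ B)))
    (M : K → K⟦X⟧)
    (hM : ∀ x, ((rescale (d1 : K) (exp K) - 1) * (rescale (d2 : K) (exp K) - 1) *
        (rescale (d3 : K) (exp K) - 1)) * M x =
      C ((d1 : K) * d2 * d3) * (X ^ 3 * rescale x (exp K))) :
    C ((d1 : K) * d2 * d3) * (X ^ 3 * ∑ s ∈ F, rescale (s : K) (exp K)) =
      -(C ((d1 : K) * d2 * d3) * (X ^ 2 * bernoulliPowerSeries K)) +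
        (M 0 - M A - M B + M ((A + B : ℕ) : K)) := by
  have hexp := congrArg (Polynomial.aeval (exp K)) hgap
  simp only [map_mul, map_sub, map_one, map_pow, map_sum, Polynomial.aeval_X,
    exp_pow_eq_rescale_exp] at hexp
  have hM0 := hM 0
  rw [show rescale (0 : K) (exp K) = 1 by simp [rescale_zero], mul_one] at hM0
  have hMAB := hM ((A + B : ℕ) : K)
  rw [show rescale ((A + B : ℕ) : K) (exp K) = rescale (A : K) (exp K) * rescale (B : K) (exp K)
    by rw [Nat.cast_add, exp_mul_exp_eq_exp_add]] at hMAB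
  have hexp_sub_one : exp K - 1 ≠ 0 := by
    simpa using rescale_exp_sub_one_ne_zero_s19 (one_ne_zero (α := K))
  have hne : (exp K - 1) * ((rescale (d1 : K) (exp K) - 1) * (rescale (d2 : K) (exp K) - 1) *
      (rescale (d3 : K) (exp K) - 1)) ≠ 0 := by
    have he1 := rescale_exp_sub_one_ne_zero_s19 ((Nat.cast_ne_zero (R := K)).mpr hd1)
    have he2 := rescale_exp_sub_one_ne_zero_s19 ((Nat.cast_ne_zero (R := K)).mpr hd2)
    have he3 := rescale_exp_sub_one_ne_zero_s19 ((Nat.cast_ne_zero (R := K)).mpr hd3)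
    positivity
  apply mul_left_cancel₀ hne
  linear_combination (C ((d1 : K) * d2 * d3) * X ^ 3) * hexp
    + (C ((d1 : K) * d2 * d3) * X ^ 2 *
        ((rescale (d1 : K) (exp K) - 1) * (rescale (d2 : K) (exp K) - 1) *
          (rescale (d3 : K) (exp K) - 1))) * bernoulliPowerSeries_mul_exp_sub_one K
    - (exp K - 1) * (hM0 - hM A - hM B + hMAB)

open PowerSeries in
open scoped Classical in
theorem power_sum_gaps_symmetric_general (d1 d2 d3 a22 a33 : ℕ)
    (h1 : 1 < d1) (h12 : d1 < d2) (h23 : d2 < d3)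
    (hfin : {s : ℕ | ¬ ∃ x1 x2 x3 : ℕ, s = x1 * d1 + x2 * d2 + x3 * d3}.Finite)
    (hH : (PowerSeries.mk fun s =>
          if ∃ x1 x2 x3 : ℕ, s = x1 * d1 + x2 * d2 + x3 * d3 then (1 : ℚ) else 0) *
        ((1 - X ^ d1) * (1 - X ^ d2) * (1 - X ^ d3)) =
      (1 - X ^ (a22 * d2)) * (1 - X ^ (a33 * d3)))
    (B3 : ℕ → ℚ → ℚ)
    (hB3 : ∀ x : ℚ, ((rescale (d1 : ℚ) (exp ℚ) - 1) * (rescale (d2 : ℚ) (exp ℚ) - 1) *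
          (rescale (d3 : ℚ) (exp ℚ) - 1)) *
        PowerSeries.mk (fun n => B3 n x / n.factorial) =
      PowerSeries.C ((d1 : ℚ) * (d2 : ℚ) * (d3 : ℚ)) * (X ^ 3 * rescale x (exp ℚ)))
    (n : ℕ) :
    ∑ s ∈ hfin.toFinset, (s : ℚ) ^ n =
      -bernoulli (n + 1) / ((n : ℚ) + 1) +
        ((n.factorial : ℚ) / (((n + 3).factorial : ℚ) * ((d1 : ℚ) * (d2 : ℚ) * (d3 : ℚ)))) *
          (B3 (n + 3) 0 - B3 (n + 3) ((a22 * d2 : ℕ) : ℚ) - B3 (n + 3) ((a33 * d3 : ℕ) : ℚ) +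
            B3 (n + 3) ((a22 * d2 + a33 * d3 : ℕ) : ℚ)) := by
  have hgap := Polynomial.sum_X_pow_mul_eq_of_mk_indicator_mul _ hfin
    (D := (1 - Polynomial.X ^ d1) * (1 - Polynomial.X ^ d2) * (1 - Polynomial.X ^ d3))
    (N := (1 - Polynomial.X ^ (a22 * d2)) * (1 - Polynomial.X ^ (a33 * d3)))
    (by push_cast; exact hH)
  have hcoeff := congrArg (coeff (n + 3)) <|
    C_mul_X_pow_three_mul_sum_rescale_exp (by omega) (by omega) (by omega) hgap _ hB3
  simp only [coeff_C_mul, coeff_X_pow_mul', coeff_sum_rescale_exp, map_add, map_sub, map_neg,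
    coeff_mk, bernoulliPowerSeries, eq_ratCast, Rat.cast_id, Nat.le_add_left, if_true,
    Nat.add_sub_cancel, show n + 3 - 2 = n + 1 by omega, Nat.factorial_succ n] at hcoeff
  have hd1 : (d1 : ℚ) ≠ 0 := Nat.cast_ne_zero.mpr (by omega)
  have hd2 : (d2 : ℚ) ≠ 0 := Nat.cast_ne_zero.mpr (by omega)
  have hd3 : (d3 : ℚ) ≠ 0 := Nat.cast_ne_zero.mpr (by omega)
  push_cast at hcoeff ⊢
  linear_combination (norm := (field_simp; ring)) ((n.factorial : ℚ) / (d1 * d2 * d3)) * hcoeff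

open PowerSeries in
open scoped Classical in
theorem power_sum_gaps_symmetric (d1 d2 d3 a11 a22 a33 : ℕ)
    (h1 : 1 < d1) (h12 : d1 < d2) (h23 : d2 < d3)
    (hgcd : Nat.gcd d1 (Nat.gcd d2 d3) = 1)
    (ha : a11 * d1 = a22 * d2)
    (hfin : {s : ℕ | ¬ ∃ x1 x2 x3 : ℕ, s = x1 * d1 + x2 * d2 + x3 * d3}.Finite)
    (hH : (PowerSeries.mk fun s =>
          if ∃ x1 x2 x3 : ℕ, s = x1 * d1 + x2 * d2 + x3 * d3 then (1 : ℚ) else 0) *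
        ((1 - X ^ d1) * (1 - X ^ d2) * (1 - X ^ d3)) =
      (1 - X ^ (a22 * d2)) * (1 - X ^ (a33 * d3)))
    (B3 : ℕ → ℚ → ℚ)
    (hB3 : ∀ x : ℚ, ((rescale (d1 : ℚ) (exp ℚ) - 1) * (rescale (d2 : ℚ) (exp ℚ) - 1) *
          (rescale (d3 : ℚ) (exp ℚ) - 1)) *
        PowerSeries.mk (fun n => B3 n x / n.factorial) =
      PowerSeries.C ((d1 : ℚ) * (d2 : ℚ) * (d3 : ℚ)) * (X ^ 3 * rescale x (exp ℚ)))
    (n : ℕ) :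
    ∑ s ∈ hfin.toFinset, (s : ℚ) ^ n =
      -bernoulli (n + 1) / ((n : ℚ) + 1) +
        ((n.factorial : ℚ) / (((n + 3).factorial : ℚ) * ((d1 : ℚ) * (d2 : ℚ) * (d3 : ℚ)))) *
          (B3 (n + 3) 0 - B3 (n + 3) ((a22 * d2 : ℕ) : ℚ) - B3 (n + 3) ((a33 * d3 : ℕ) : ℚ) +
            B3 (n + 3) ((a22 * d2 + a33 * d3 : ℕ) : ℚ)) :=
  power_sum_gaps_symmetric_general d1 d2 d3 a22 a33 h1 h12 h23 hfin hH B3 hB3 n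
end
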